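/- arXiv:0710.2113 — 6 statements merged into one kernel-verified Lean document; each statement's English description precedes it below -/
import Mathlib

section
/- The fixed point subalgebra of θ̂ on q⟨m⟩ has degree-i component equal to q_i (the ζ^i-eigenspace of θ, with index taken mod |θ|) for each i = 0,1,…,m−1; that is, q⟨m⟩^{θ̂} = q_0 ⋉ q_1 ⋉ … ⋉ q_{m−1}. -/
open Finset Module

/-- The bracket of the Takiff algebra `q⟨m⟩`, modelled on `Fin m → L`:
`[x⃗,y⃗]ₗ = ∑_{i+j=l} [xᵢ,yⱼ]`. -/
def takiffBracket {L : Type*} [LieRing L] (m : ℕ) (x y : Fin m → L) : Fin m → L :=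
  fun l => ∑ i : Fin m, ∑ j : Fin m,
    if (i : ℕ) + (j : ℕ) = (l : ℕ) then ⁅x i, y j⁆ else 0

/-! Since `ζ ≠ 0`, `θ̂ x = x` unwinds to `θ xᵢ = ζⁱ xᵢ`. Such tuples are closed under the
Takiff bracket because `θ` preserves brackets and the eigenvalues multiply,
`ζⁱ ζʲ = ζ^{i+j}`, exactly as the degrees add in `[x⃗,y⃗]ₗ = ∑_{i+j=l} [xᵢ,yⱼ]`. -/

theorem map_takiffBracket_of_graded_eigen {R L : Type*} [CommRing R] [LieRing L]
    [LieAlgebra R L] {θ : L →ₗ[R] L} (hbr : ∀ x y : L, θ ⁅x, y⁆ = ⁅θ x, θ y⁆) {ζ : R}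
    {m : ℕ} {x y : Fin m → L} (hx : ∀ i : Fin m, θ (x i) = ζ ^ (i : ℕ) • x i)
    (hy : ∀ j : Fin m, θ (y j) = ζ ^ (j : ℕ) • y j) (l : Fin m) :
    θ (takiffBracket m x y l) = ζ ^ (l : ℕ) • takiffBracket m x y l := by
  simp only [takiffBracket, map_sum, smul_sum]
  refine sum_congr rfl fun i _ => sum_congr rfl fun j _ => ?_
  split_ifs with hij
  · rw [hbr, hx, hy, smul_lie, lie_smul, smul_smul, ← pow_add, hij]
  · rw [map_zero, smul_zero]

theorem fixed_points_of_takiff_extension_general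
    {𝕜 L : Type*} [Field 𝕜] [LieRing L] [LieAlgebra 𝕜 L]
    (k m : ℕ) (hk : 0 < k)
    (ζ : 𝕜) (hζ : IsPrimitiveRoot ζ k)
    (θ : L ≃ₗ[𝕜] L) (hbr : ∀ x y : L, θ ⁅x, y⁆ = ⁅θ x, θ y⁆)
    (Θ : (Fin m → L) → (Fin m → L))
    (hΘ : ∀ x (i : Fin m), Θ x i = (ζ⁻¹) ^ (i : ℕ) • θ (x i)) :
    {x : Fin m → L | Θ x = x} =
      {x : Fin m → L | ∀ i : Fin m, θ (x i) = ζ ^ (i : ℕ) • x i} ∧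
    (∀ x y : Fin m → L, Θ x = x → Θ y = y →
      Θ (takiffBracket m x y) = takiffBracket m x y) := by
  have hζ0 : ζ ≠ 0 := hζ.ne_zero hk.ne'
  have fixed_iff (x : Fin m → L) : Θ x = x ↔ ∀ i : Fin m, θ (x i) = ζ ^ (i : ℕ) • x i := by
    simp only [funext_iff, hΘ, inv_pow, inv_smul_eq_iff₀ (pow_ne_zero _ hζ0)]
  refine ⟨Set.ext fixed_iff, fun x y hx hy => ?_⟩
  rw [fixed_iff] at hx hy ⊢
  exact map_takiffBracket_of_graded_eigen (θ := θ.toLinearMap) hbr hx hy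

/-- The fixed point subalgebra of `θ̂` on `q⟨m⟩` has degree-`i`
component equal to `q_i`, the `ζⁱ`-eigenspace of `θ` (index mod `|θ| = k`, which is
automatic since `ζᵏ = 1`); that is, `q⟨m⟩^{θ̂} = q₀ ⋉ q₁ ⋉ … ⋉ q_{m−1}`, a
subalgebra of `q⟨m⟩`. -/
theorem fixed_points_of_takiff_extension
    {𝕜 L : Type*} [Field 𝕜] [CharZero 𝕜] [LieRing L] [LieAlgebra 𝕜 L]
    (k m : ℕ) (hk : 0 < k)
    (ζ : 𝕜) (hζ : IsPrimitiveRoot ζ k)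
    (θ : L ≃ₗ[𝕜] L) (hbr : ∀ x y : L, θ ⁅x, y⁆ = ⁅θ x, θ y⁆)
    (hθk : (⇑θ)^[k] = id)
    (Θ : (Fin m → L) → (Fin m → L))
    (hΘ : ∀ x (i : Fin m), Θ x i = (ζ⁻¹) ^ (i : ℕ) • θ (x i)) :
    {x : Fin m → L | Θ x = x} =
      {x : Fin m → L | ∀ i : Fin m, θ (x i) = ζ ^ (i : ℕ) • x i} ∧
    (∀ x y : Fin m → L, Θ x = x → Θ y = y →
      Θ (takiffBracket m x y) = takiffBracket m x y) :=
  fixed_points_of_takiff_extension_general k m hk ζ hζ θ hbr Θ hΘ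
end

section
/- Given a quasi-graded structure Γ = {q_i}_{i=0}^{k−1} on a Lie algebra q, the bracket [x_i, x_j]_Γ defined to equal [x_i, x_j] when i+j ≤ k−1 and 0 when i+j ≥ k satisfies the Jacobi identity, making the underlying vector space of q into an ℕ-graded Lie algebra C_Γ(q). -/
/-!
The projections `π i` are orthogonal idempotents, so `[q_i, q_j] ⊆ q_{i+j}` for `i + j < k`
says that, for `n ≤ k`, the part of `[x, y]_Γ` of degree `< n` is the sum of the terms
`[x_i, y_j]` with `i + j < n`. Hence `[[x, y]_Γ, z]_Γ = ∑_{i+j+m<k} [[x_i, y_j], z_m]`;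
the condition `i + j + m < k` is invariant under cyclic permutations of `(i, j, m)`, so the
Jacobi identity of the contraction follows termwise from that of `q`.
-/

open Finset

section Projections

variable {R M : Type*} [Semiring R] [AddCommMonoid M] [Module R M] {k : ℕ} {π : ℕ → M →ₗ[R] M}

theorem proj_apply_proj (hsum : ∀ x, ∑ i ∈ range k, π i x = x)
    (horth : ∀ i j, i ≠ j → ∀ x, π i (π j x) = 0) {i : ℕ} (hi : i < k) (j : ℕ) (x : M) :
    π i (π j x) = if i = j then π j x else 0 := by
  split_ifs with h
  · subst h
    simpa [sum_eq_single_of_mem i (mem_range.2 hi) fun l _ hl => horth l i hl x]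
      using hsum (π i x)
  · exact horth i j h x

theorem sum_range_proj_proj (hsum : ∀ x, ∑ i ∈ range k, π i x = x)
    (horth : ∀ i j, i ≠ j → ∀ x, π i (π j x) = 0) {n : ℕ} (hn : n ≤ k) (d : ℕ) (x : M) :
    ∑ l ∈ range n, π l (π d x) = if d < n then π d x else 0 := by
  rw [sum_congr rfl fun l hl => proj_apply_proj hsum horth ((mem_range.1 hl).trans_le hn) d x]
  simp

end Projections

theorem sum_sum_sum_rotate {ι M : Type*} [AddCommMonoid M] (s : Finset ι) (f : ι → ι → ι → M) :
    ∑ a ∈ s, ∑ b ∈ s, ∑ c ∈ s, f a b c = ∑ i ∈ s, ∑ j ∈ s, ∑ m ∈ s, f j m i :=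
  (sum_comm.trans (sum_congr rfl fun _ _ => sum_comm)).symm

section Lie

variable {R L : Type*} [CommRing R] [LieRing L] [LieAlgebra R L]

theorem lie_lie_add_lie_lie_add_lie_lie (a b c : L) :
    ⁅⁅a, b⁆, c⁆ + ⁅⁅b, c⁆, a⁆ + ⁅⁅c, a⁆, b⁆ = 0 := by
  rw [← lie_skew ⁅a, b⁆, ← lie_skew ⁅b, c⁆, ← lie_skew ⁅c, a⁆]
  linear_combination (norm := abel) -lie_jacobi a b c

theorem sum_sum_ite_lie_self {ι : Type*} (s : Finset ι) (p : ι → ι → Prop) [DecidableRel p]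
    (hp : ∀ i j, p i j → p j i) (f : ι → L) :
    ∑ i ∈ s, ∑ j ∈ s, (if p i j then ⁅f i, f j⁆ else 0) = 0 := by
  rw [← sum_product']
  refine sum_involution (fun a _ => Prod.swap a) (fun ⟨i, j⟩ _ => ?_) (fun ⟨i, j⟩ _ h => ?_)
    (fun a ha => by simpa [and_comm] using ha) (fun a _ => a.swap_swap)
  · by_cases h : p i j
    · simp only [Prod.swap_prod_mk, if_pos h, if_pos (hp i j h)]
      rw [← lie_skew, neg_add_cancel]
    · simp [h, mt (hp j i) h]
  · intro hswap
    obtain rfl : j = i := congrArg Prod.fst hswap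
    simp at h

def contractedBracket (k : ℕ) (π : ℕ → L →ₗ[R] L) : L →ₗ[R] L →ₗ[R] L :=
  ∑ i ∈ range k, ∑ j ∈ range k,
    if i + j < k then (LieModule.toEnd R L L : L →ₗ[R] Module.End R L).compl₁₂ (π i) (π j) else 0

theorem contractedBracket_apply (k : ℕ) (π : ℕ → L →ₗ[R] L) (x y : L) :
    contractedBracket k π x y =
      ∑ i ∈ range k, ∑ j ∈ range k, if i + j < k then ⁅π i x, π j y⁆ else 0 := by
  simp only [contractedBracket, LinearMap.sum_apply]
  refine sum_congr rfl fun i _ => sum_congr rfl fun j _ => ?_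
  split_ifs <;> rfl

variable {k : ℕ} {π : ℕ → L →ₗ[R] L}

theorem contractedBracket_self (x : L) : contractedBracket k π x x = 0 := by
  rw [contractedBracket_apply]
  exact sum_sum_ite_lie_self _ (fun i j => i + j < k) (fun i j h => by omega) (π · x)

theorem contractedBracket_proj_proj (hsum : ∀ x, ∑ i ∈ range k, π i x = x)
    (horth : ∀ i j, i ≠ j → ∀ x, π i (π j x) = 0) (a b : ℕ) (x y : L) :
    contractedBracket k π (π a x) (π b y) = if a + b < k then ⁅π a x, π b y⁆ else 0 := by
  rw [contractedBracket_apply]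
  calc _ = ∑ i ∈ range k, ∑ j ∈ range k,
        if i = a then (if j = b then (if a + b < k then ⁅π a x, π b y⁆ else 0) else 0) else 0 := by
        refine sum_congr rfl fun i hi => sum_congr rfl fun j hj => ?_
        rw [proj_apply_proj hsum horth (mem_range.1 hi),
          proj_apply_proj hsum horth (mem_range.1 hj)]
        split_ifs <;> simp_all
    _ = _ := by
      simp only [sum_ite_irrel, sum_ite_eq', mem_range, sum_const_zero]
      split_ifs <;> first | rfl | omega

theorem sum_range_proj_contractedBracket (hsum : ∀ x, ∑ i ∈ range k, π i x = x)
    (horth : ∀ i j, i ≠ j → ∀ x, π i (π j x) = 0)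
    (hgrade : ∀ i j, i + j < k → ∀ x y, ⁅π i x, π j y⁆ ∈ LinearMap.range (π (i + j)))
    {n : ℕ} (hn : n ≤ k) (x y : L) :
    ∑ l ∈ range n, π l (contractedBracket k π x y) =
      ∑ i ∈ range k, ∑ j ∈ range k, if i + j < n then ⁅π i x, π j y⁆ else 0 := by
  simp only [contractedBracket_apply, map_sum]
  rw [sum_comm]
  refine sum_congr rfl fun i _ => ?_
  rw [sum_comm]
  refine sum_congr rfl fun j _ => ?_
  by_cases hij : i + j < k
  · obtain ⟨w, hw⟩ := hgrade i j hij x y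
    rw [if_pos hij, ← hw, sum_range_proj_proj hsum horth hn]
  · rw [if_neg hij, if_neg (by omega)]
    simp

theorem contractedBracket_eq_sum_lie_sum_proj (w z : L) :
    contractedBracket k π w z = ∑ m ∈ range k, ⁅∑ l ∈ range (k - m), π l w, π m z⁆ := by
  rw [contractedBracket_apply, sum_comm]
  refine sum_congr rfl fun m _ => ?_
  rw [sum_lie, ← sum_filter]
  congr 1
  ext l
  simp only [mem_filter, mem_range]
  omega

theorem contractedBracket_contractedBracket (hsum : ∀ x, ∑ i ∈ range k, π i x = x)
    (horth : ∀ i j, i ≠ j → ∀ x, π i (π j x) = 0)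
    (hgrade : ∀ i j, i + j < k → ∀ x y, ⁅π i x, π j y⁆ ∈ LinearMap.range (π (i + j)))
    (x y z : L) :
    contractedBracket k π (contractedBracket k π x y) z =
      ∑ i ∈ range k, ∑ j ∈ range k, ∑ m ∈ range k,
        if i + j + m < k then ⁅⁅π i x, π j y⁆, π m z⁆ else 0 := by
  rw [contractedBracket_eq_sum_lie_sum_proj]
  calc _ = ∑ m ∈ range k, ∑ i ∈ range k, ∑ j ∈ range k,
        if i + j + m < k then ⁅⁅π i x, π j y⁆, π m z⁆ else 0 := by
        refine sum_congr rfl fun m _ => ?_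
        rw [sum_range_proj_contractedBracket hsum horth hgrade (k.sub_le m), sum_lie]
        refine sum_congr rfl fun i _ => ?_
        rw [sum_lie]
        refine sum_congr rfl fun j _ => ?_
        simp only [Nat.lt_sub_iff_add_lt, apply_ite (⁅·, π m z⁆), zero_lie]
    _ = _ := sum_comm.trans (sum_congr rfl fun _ _ => sum_comm)

theorem contractedBracket_jacobi (hsum : ∀ x, ∑ i ∈ range k, π i x = x)
    (horth : ∀ i j, i ≠ j → ∀ x, π i (π j x) = 0)
    (hgrade : ∀ i j, i + j < k → ∀ x y, ⁅π i x, π j y⁆ ∈ LinearMap.range (π (i + j)))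
    (x y z : L) :
    contractedBracket k π (contractedBracket k π x y) z +
      contractedBracket k π (contractedBracket k π y z) x +
        contractedBracket k π (contractedBracket k π z x) y = 0 := by
  simp only [contractedBracket_contractedBracket hsum horth hgrade]
  rw [sum_sum_sum_rotate (range k)
      fun i j m => if i + j + m < k then ⁅⁅π i y, π j z⁆, π m x⁆ else 0,
    ← sum_sum_sum_rotate (range k)
      fun a b c => if c + a + b < k then ⁅⁅π c z, π a x⁆, π b y⁆ else 0]
  simp only [← sum_add_distrib]
  refine sum_eq_zero fun i _ => sum_eq_zero fun j _ => sum_eq_zero fun m _ => ?_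
  by_cases h : i + j + m < k
  · rw [if_pos h, if_pos (by omega), if_pos (by omega)]
    exact lie_lie_add_lie_lie_add_lie_lie _ _ _
  · rw [if_neg h, if_neg (by omega), if_neg (by omega), add_zero, add_zero]

end Lie

theorem quasi_graded_contraction_is_graded_lie_algebra_general
    {𝕜 L : Type*} [Field 𝕜] [LieRing L] [LieAlgebra 𝕜 L]
    (k : ℕ) (π : ℕ → (L →ₗ[𝕜] L))
    (hsum : ∀ x : L, ∑ i ∈ Finset.range k, π i x = x)
    (horth : ∀ i j, i ≠ j → ∀ x : L, π i (π j x) = 0)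
    (hgrade : ∀ i j : ℕ, i + j ≤ k - 1 → ∀ x y : L,
      ⁅π i x, π j y⁆ ∈ LinearMap.range (π (i + j)))
    (BΓ : L → L → L)
    (hBΓ : ∀ x y : L, BΓ x y = ∑ i ∈ Finset.range k, ∑ j ∈ Finset.range k,
      if i + j ≤ k - 1 then ⁅π i x, π j y⁆ else 0) :
    -- bilinearity
    (∀ (a : 𝕜) (x x' y : L), BΓ (a • x + x') y = a • BΓ x y + BΓ x' y) ∧
    (∀ (a : 𝕜) (x y y' : L), BΓ x (a • y + y') = a • BΓ x y + BΓ x y') ∧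
    -- the bracket is alternating
    (∀ x : L, BΓ x x = 0) ∧
    -- the Jacobi identity
    (∀ x y z : L, BΓ (BΓ x y) z + BΓ (BΓ y z) x + BΓ (BΓ z x) y = 0) ∧
    -- ℕ-grading: `[q_i, q_j]_Γ ⊆ q_{i+j}` for all `i, j` (with `q_l = 0` for `l ≥ k`)
    (∀ i j : ℕ, ∀ x y : L, BΓ (π i x) (π j y) ∈ LinearMap.range (π (i + j))) := by
  have hgrade_lt : ∀ i j, i + j < k → ∀ x y, ⁅π i x, π j y⁆ ∈ LinearMap.range (π (i + j)) :=
    fun i j h => hgrade i j (by omega)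
  obtain rfl : BΓ = fun x y => contractedBracket k π x y := by
    ext x y
    rw [hBΓ, contractedBracket_apply]
    refine sum_congr rfl fun i hi => sum_congr rfl fun j _ => ?_
    simp only [Nat.le_sub_one_iff_lt (Nat.zero_lt_of_lt (mem_range.1 hi))]
  refine ⟨fun a x x' y => by simp, fun a x y y' => by simp, contractedBracket_self,
    contractedBracket_jacobi hsum horth hgrade_lt, fun i j x y => ?_⟩
  dsimp only
  rw [contractedBracket_proj_proj hsum horth]
  split_ifs with h
  · exact hgrade_lt i j h x y
  · exact zero_mem _

/-- Let `q = ⊕_{i=0}^{k−1} q_i` be a quasi-graded Lie algebra, encoded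
by the projections `π i` onto the components `q_i = range (π i)`, so that
`[q_i, q_j] ⊆ q_{i+j}` whenever `i + j ≤ k − 1`.  Then the contracted bracket
`[x_i, x_j]_Γ = [x_i, x_j]` if `i+j ≤ k−1` and `0` if `i+j ≥ k` is bilinear and
alternating and satisfies the Jacobi identity, making the underlying vector space into
an ℕ-graded Lie algebra `C_Γ(q)`. -/
theorem quasi_graded_contraction_is_graded_lie_algebra
    {𝕜 L : Type*} [Field 𝕜] [CharZero 𝕜] [LieRing L] [LieAlgebra 𝕜 L]
    (k : ℕ) (hk : 0 < k) (π : ℕ → (L →ₗ[𝕜] L))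
    (hsum : ∀ x : L, ∑ i ∈ Finset.range k, π i x = x)
    (horth : ∀ i j, i ≠ j → ∀ x : L, π i (π j x) = 0)
    (hzero : ∀ i, k ≤ i → π i = 0)
    (hgrade : ∀ i j : ℕ, i + j ≤ k - 1 → ∀ x y : L,
      ⁅π i x, π j y⁆ ∈ LinearMap.range (π (i + j)))
    (BΓ : L → L → L)
    (hBΓ : ∀ x y : L, BΓ x y = ∑ i ∈ Finset.range k, ∑ j ∈ Finset.range k,
      if i + j ≤ k - 1 then ⁅π i x, π j y⁆ else 0) :
    -- bilinearity
    (∀ (a : 𝕜) (x x' y : L), BΓ (a • x + x') y = a • BΓ x y + BΓ x' y) ∧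
    (∀ (a : 𝕜) (x y y' : L), BΓ x (a • y + y') = a • BΓ x y + BΓ x y') ∧
    -- the bracket is alternating
    (∀ x : L, BΓ x x = 0) ∧
    -- the Jacobi identity
    (∀ x y z : L, BΓ (BΓ x y) z + BΓ (BΓ y z) x + BΓ (BΓ z x) y = 0) ∧
    -- ℕ-grading: `[q_i, q_j]_Γ ⊆ q_{i+j}` for all `i, j` (with `q_l = 0` for `l ≥ k`)
    (∀ i j : ℕ, ∀ x y : L, BΓ (π i x) (π j y) ∈ LinearMap.range (π (i + j))) :=
  quasi_graded_contraction_is_graded_lie_algebra_general k π hsum horth hgrade BΓ hBΓ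
end

section
/- Let θ ∈ Aut(q) have order k with fixed-point subalgebra q_0. Then the direct sum q_0 ∔ q admits a quasi-graded structure of order k+1 given by s_0 = {(x,x) : x ∈ q_0}, s_i = q_i for 1 ≤ i ≤ k−1, and s_k = q_0 ⊂ q, and the corresponding quasi-graded contraction is isomorphic to q_0 ⋉ q_1 ⋉ … ⋉ q_{k−1} ⋉ q_0. -/
open Finset Module

/-- The componentwise Lie bracket on the direct sum `q ∔ q` (modelled as `L × L`). -/
def prodBracket {L : Type*} [LieRing L] (u v : L × L) : L × L :=
  (⁅u.1, v.1⁆, ⁅u.2, v.2⁆)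

/-!
Put `ι_i x = (x, x)` for `i = 0` and `ι_i x = (0, x)` for `i > 0`. Then `s_i = ι_i(q_{i mod k})` for
every `0 ≤ i ≤ k`, and `[ι_i x, ι_j y] = ι_{i+j}[x, y]` holds for all `i, j`, which is the
quasi-grading since `[q_a, q_b] ⊆ q_{a+b}`. The comparison map sends `(a, b) ∈ q₀ ∔ q` to
`(a, P₁ b, …, P_{k−1} b, P₀ b − a)`; on tuples `z` with `z_l ∈ q_{l mod k}` it is inverted by
`z ↦ ∑ ι_l z_l = (z₀, ∑ z_l)`, because `∑ P_i b = b` and the `P_i` are orthogonal idempotents.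
This gives the direct sum decomposition at once, and the contracted bracket
`∑_{i+j ≤ k} ι_{i+j}[e(u)_i, e(v)_j]` is the image under the inverse of the truncated
Takiff bracket of `e(u)` and `e(v)`.
-/

theorem iSupIndep_of_apply_eq_zero {ι R M N : Type*} [Semiring R] [AddCommMonoid M] [Module R M]
    [AddCommMonoid N] [Module R N] {S : ι → Submodule R M} (f : M →ₗ[R] ι → N)
    (hoff : ∀ i j, i ≠ j → ∀ x ∈ S j, f x i = 0) (hdiag : ∀ i, ∀ x ∈ S i, f x i = 0 → x = 0) :
    iSupIndep S := by
  refine fun i => Submodule.disjoint_def.mpr fun x hxi hx => hdiag i x hxi ?_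
  have hle : (⨆ j, ⨆ _ : j ≠ i, S j) ≤ LinearMap.ker (LinearMap.proj i ∘ₗ f) :=
    iSup₂_le fun j hji y hy => hoff i j (Ne.symm hji) y hy
  exact hle hx

section Takiff

variable {L M F : Type*} [LieRing L] [AddCommMonoid M] [FunLike F L M] [AddMonoidHomClass F L M]

theorem sum_map_takiffBracket (m : ℕ) (f : ℕ → F) (x y : Fin m → L) :
    ∑ l : Fin m, f l (takiffBracket m x y l) =
      ∑ i : Fin m, ∑ j : Fin m, if (i : ℕ) + j < m then f (i + j) ⁅x i, y j⁆ else 0 := by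
  simp only [takiffBracket, map_sum]
  rw [Finset.sum_comm]
  refine Finset.sum_congr rfl fun i _ => ?_
  rw [Finset.sum_comm]
  refine Finset.sum_congr rfl fun j _ => ?_
  rw [Fin.sum_univ_eq_sum_range (fun l => f l (if (i : ℕ) + j = l then ⁅x i, y j⁆ else 0)) m]
  split_ifs with h
  · rw [Finset.sum_eq_single (i + j : ℕ) (fun l _ hl => by simp [Ne.symm hl]) (by simp [h])]
    simp
  · exact Finset.sum_eq_zero fun l hl => by simp at hl; simp [show (i : ℕ) + j ≠ l by omega]

end Takiff

theorem Nat.forall_le_of_zero_of_mid_of_self {k : ℕ} {p : ℕ → Prop} (h0 : p 0)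
    (hmid : ∀ i, 1 ≤ i → i ≤ k - 1 → p i) (hk : p k) : ∀ l ≤ k, p l := by
  intro l hl
  rcases Nat.eq_zero_or_pos l with rfl | hl0
  · exact h0
  rcases hl.eq_or_lt with rfl | hlk
  · exact hk
  · exact hmid l hl0 (by omega)

section ProjectionFamily

variable {R L : Type*} [Semiring R] [AddCommMonoid L] [Module R L] {k : ℕ} {P : ℕ → L →ₗ[R] L}

theorem isIdempotentElem_of_sum_eq (hsum : ∀ x : L, ∑ i ∈ range k, P i x = x)
    (horth : ∀ i j, i ≠ j → ∀ x : L, P i (P j x) = 0) {i : ℕ} (hi : i < k) :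
    IsIdempotentElem (P i) := by
  refine LinearMap.ext fun x => ?_
  calc P i (P i x) = ∑ j ∈ range k, P i (P j x) :=
        (Finset.sum_eq_single_of_mem i (mem_range.mpr hi)
          fun j _ hji => horth i j (Ne.symm hji) x).symm
    _ = P i x := by rw [← map_sum, hsum]

theorem apply_eq_self_of_mem_range (hsum : ∀ x : L, ∑ i ∈ range k, P i x = x)
    (horth : ∀ i j, i ≠ j → ∀ x : L, P i (P j x) = 0) {j : ℕ} (hj : j < k) {x : L}
    (hx : x ∈ LinearMap.range (P j)) : P j x = x :=
  (LinearMap.IsIdempotentElem.mem_range_iff (isIdempotentElem_of_sum_eq hsum horth hj)).mp hx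

theorem apply_eq_ite_of_mem_range (hsum : ∀ x : L, ∑ i ∈ range k, P i x = x)
    (horth : ∀ i j, i ≠ j → ∀ x : L, P i (P j x) = 0) (i : ℕ) {j : ℕ} (hj : j < k) {x : L}
    (hx : x ∈ LinearMap.range (P j)) : P i x = if i = j then x else 0 := by
  split_ifs with hij
  · exact hij ▸ apply_eq_self_of_mem_range hsum horth hj hx
  · obtain ⟨y, rfl⟩ := hx
    exact horth i j hij y

end ProjectionFamily

section LieGrading

variable {R L : Type*} [Semiring R] [LieRing L] [Module R L] {k : ℕ} {P : ℕ → L →ₗ[R] L}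

theorem lie_mem_range_mod (hk : 0 < k)
    (hgrade : ∀ i j, i < k → j < k → ∀ x y : L,
      ⁅P i x, P j y⁆ ∈ LinearMap.range (P ((i + j) % k)))
    {i j : ℕ} {x y : L} (hx : x ∈ LinearMap.range (P (i % k)))
    (hy : y ∈ LinearMap.range (P (j % k))) :
    ⁅x, y⁆ ∈ LinearMap.range (P ((i + j) % k)) := by
  obtain ⟨x, rfl⟩ := hx
  obtain ⟨y, rfl⟩ := hy
  simpa only [← Nat.add_mod] using hgrade _ _ (Nat.mod_lt i hk) (Nat.mod_lt j hk) x y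

theorem takiffBracket_mem_range_mod (hk : 0 < k)
    (hgrade : ∀ i j, i < k → j < k → ∀ x y : L,
      ⁅P i x, P j y⁆ ∈ LinearMap.range (P ((i + j) % k)))
    {m : ℕ} {x y : Fin m → L} (hx : ∀ l : Fin m, x l ∈ LinearMap.range (P (l % k)))
    (hy : ∀ l : Fin m, y l ∈ LinearMap.range (P (l % k))) (l : Fin m) :
    takiffBracket m x y l ∈ LinearMap.range (P (l % k)) := by
  refine Submodule.sum_mem _ fun i _ => Submodule.sum_mem _ fun j _ => ?_
  split_ifs with hij
  · exact hij ▸ lie_mem_range_mod hk hgrade (hx i) (hy j)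
  · exact Submodule.zero_mem _

end LieGrading

namespace IsotropyContraction

variable {R L : Type*} [Ring R] [LieRing L] [Module R L]

variable (R) in
def embed (i : ℕ) : L →ₗ[R] L × L :=
  (if i = 0 then LinearMap.id else 0).prod LinearMap.id

theorem embed_apply (i : ℕ) (x : L) : embed R i x = (if i = 0 then x else 0, x) := by
  unfold embed; split_ifs <;> rfl

theorem embed_comp {M : Type*} [AddCommGroup M] [Module R M] (i : ℕ) (f : M →ₗ[R] L) :
    embed R i ∘ₗ f = (if i = 0 then f else 0).prod f := by
  unfold embed; split_ifs <;> rfl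

theorem prodBracket_embed (i j : ℕ) (x y : L) :
    prodBracket (embed R i x) (embed R j y) = embed R (i + j) ⁅x, y⁆ := by
  simp only [embed_apply, prodBracket, Nat.add_eq_zero_iff]
  split_ifs <;> simp_all

variable (k : ℕ) (P : ℕ → L →ₗ[R] L)

/-- The paper's `s_l` for `l ≤ k`. -/
def level (l : ℕ) : Submodule R (L × L) :=
  (LinearMap.range (P (l % k))).map (embed R l)

def coord (l : ℕ) : L × L →ₗ[R] L :=
  if l = 0 then P 0 ∘ₗ LinearMap.fst R L L
  else if l < k then P l ∘ₗ LinearMap.snd R L L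
  else P 0 ∘ₗ LinearMap.snd R L L - P 0 ∘ₗ LinearMap.fst R L L

def toTakiff : L × L →ₗ[R] Fin (k + 1) → L :=
  LinearMap.pi fun l => coord k P l

def ofTakiff (z : Fin (k + 1) → L) : L × L := (z 0, ∑ l, z l)

variable {k P}

theorem level_eq_range (l : ℕ) :
    level k P l = LinearMap.range ((if l = 0 then P (l % k) else 0).prod (P (l % k))) := by
  rw [level, ← LinearMap.range_comp, embed_comp]

theorem level_zero : level k P 0 = LinearMap.range ((P 0).prod (P 0)) := by
  rw [level_eq_range, if_pos rfl, Nat.zero_mod]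

theorem level_of_pos_of_lt {l : ℕ} (hl0 : 0 < l) (hlk : l < k) :
    level k P l = LinearMap.range ((0 : L →ₗ[R] L).prod (P l)) := by
  rw [level_eq_range, if_neg hl0.ne', Nat.mod_eq_of_lt hlk]

theorem level_self (hk : 0 < k) :
    level k P k = LinearMap.range ((0 : L →ₗ[R] L).prod (P 0)) := by
  rw [level_eq_range, if_neg hk.ne', Nat.mod_self]

theorem coord_apply (l : ℕ) (u : L × L) :
    coord k P l u = if l = 0 then P 0 u.1 else if l < k then P l u.2 else P 0 u.2 - P 0 u.1 := by
  unfold coord; split_ifs <;> rfl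

theorem embed_coord_zero (u : L × L) : embed R 0 (coord k P 0 u) = (P 0 u.1, P 0 u.1) := by
  simp [embed_apply, coord_apply]

theorem embed_coord_of_pos_of_lt {l : ℕ} (hl0 : 0 < l) (hlk : l < k) (u : L × L) :
    embed R l (coord k P l u) = (0, P l u.2) := by
  simp [embed_apply, coord_apply, hl0.ne', hlk]

theorem embed_coord_self (hk : 0 < k) (u : L × L) :
    embed R k (coord k P k u) = (0, P 0 u.2 - P 0 u.1) := by
  simp [embed_apply, coord_apply, hk.ne']

theorem toTakiff_apply (u : L × L) (l : Fin (k + 1)) : toTakiff k P u l = coord k P l u := rfl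

variable (R) in
theorem ofTakiff_eq_sum_embed (z : Fin (k + 1) → L) :
    ofTakiff k z = ∑ l : Fin (k + 1), embed R l (z l) := by
  simp only [ofTakiff, embed_apply, Prod.ext_iff, Prod.fst_sum, Prod.snd_sum, Fin.val_eq_zero_iff,
    Finset.sum_ite_eq', Finset.mem_univ, if_true, and_true]

theorem prodBracket_mem_level (hk : 0 < k)
    (hgrade : ∀ i j, i < k → j < k → ∀ x y : L,
      ⁅P i x, P j y⁆ ∈ LinearMap.range (P ((i + j) % k)))
    {i j : ℕ} {u v : L × L} (hu : u ∈ level k P i) (hv : v ∈ level k P j) :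
    prodBracket u v ∈ level k P (i + j) := by
  obtain ⟨x, hx, rfl⟩ := hu
  obtain ⟨y, hy, rfl⟩ := hv
  rw [prodBracket_embed]
  exact Submodule.mem_map_of_mem (lie_mem_range_mod hk hgrade hx hy)

theorem coord_mem_range {l : ℕ} (hl : l ≤ k) (u : L × L) :
    coord k P l u ∈ LinearMap.range (P (l % k)) := by
  rw [coord_apply]
  split_ifs with h0 hlt
  · rw [h0, Nat.zero_mod]
    exact LinearMap.mem_range_self _ _
  · rw [Nat.mod_eq_of_lt hlt]
    exact LinearMap.mem_range_self _ _
  · rw [show l = k by omega, Nat.mod_self]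
    exact sub_mem (LinearMap.mem_range_self _ _) (LinearMap.mem_range_self _ _)

theorem toTakiff_mem_range (u : L × L) (l : Fin (k + 1)) :
    toTakiff k P u l ∈ LinearMap.range (P (l % k)) :=
  coord_mem_range (Nat.le_of_lt_succ l.isLt) u

theorem toTakiff_embed (hk : 0 < k) (hsum : ∀ x : L, ∑ i ∈ range k, P i x = x)
    (horth : ∀ i j, i ≠ j → ∀ x : L, P i (P j x) = 0) (m : Fin (k + 1)) {x : L}
    (hx : x ∈ LinearMap.range (P (m % k))) : toTakiff k P (embed R m x) = Pi.single m x := by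
  have hPx := fun i => apply_eq_ite_of_mem_range hsum horth i (Nat.mod_lt _ hk) hx
  funext l
  simp only [toTakiff_apply, coord_apply, embed_apply, Pi.single_apply, Fin.ext_iff,
    apply_ite (P _), map_zero, hPx]
  rcases eq_or_ne (m : ℕ) k with hmk | hmk
  · simp only [hmk, Nat.mod_self]
    split_ifs <;> first | omega | simp
  · simp only [Nat.mod_eq_of_lt (show (m : ℕ) < k by omega)]
    split_ifs <;> first | omega | simp

theorem toTakiff_ofTakiff (hk : 0 < k) (hsum : ∀ x : L, ∑ i ∈ range k, P i x = x)
    (horth : ∀ i j, i ≠ j → ∀ x : L, P i (P j x) = 0) {z : Fin (k + 1) → L}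
    (hz : ∀ l : Fin (k + 1), z l ∈ LinearMap.range (P (l % k))) :
    toTakiff k P (ofTakiff k z) = z := by
  simp only [ofTakiff_eq_sum_embed R, map_sum, toTakiff_embed hk hsum horth _ (hz _),
    Finset.univ_sum_single]

theorem sum_range_coord (hk : 0 < k) (hsum : ∀ x : L, ∑ i ∈ range k, P i x = x) (u : L × L) :
    ∑ l ∈ range (k + 1), coord k P l u = u.2 := by
  obtain ⟨n, rfl⟩ : ∃ n, k = n + 1 := ⟨k - 1, by omega⟩
  have hmid : ∀ i ∈ range n, coord (n + 1) P (i + 1) u = P (i + 1) u.2 := fun i hi => by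
    rw [coord_apply, if_neg (by omega), if_pos (by simp at hi; omega)]
  conv_rhs => rw [← hsum u.2, sum_range_succ']
  rw [sum_range_succ, sum_range_succ', sum_congr rfl hmid, coord_apply, coord_apply,
    if_pos rfl, if_neg (by omega), if_neg (by omega)]
  abel

theorem ofTakiff_toTakiff (hk : 0 < k) (hsum : ∀ x : L, ∑ i ∈ range k, P i x = x)
    (horth : ∀ i j, i ≠ j → ∀ x : L, P i (P j x) = 0) {u : L × L}
    (hu : u.1 ∈ LinearMap.range (P 0)) : ofTakiff k (toTakiff k P u) = u := by
  refine Prod.ext ?_ ?_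
  · rw [ofTakiff, toTakiff_apply, coord_apply, if_pos (Fin.val_zero (k + 1))]
    exact apply_eq_self_of_mem_range hsum horth hk hu
  · rw [ofTakiff, ← sum_range_coord hk hsum u]
    exact Fin.sum_univ_eq_sum_range (fun l => coord k P l u) (k + 1)

theorem iSup_level (hk : 0 < k) (hsum : ∀ x : L, ∑ i ∈ range k, P i x = x)
    (horth : ∀ i j, i ≠ j → ∀ x : L, P i (P j x) = 0) :
    ⨆ l : Fin (k + 1), level k P l = (LinearMap.range (P 0)).prod ⊤ := by
  refine le_antisymm (iSup_le fun l => ?_) fun u hu => ?_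
  · rintro _ ⟨x, hx, rfl⟩
    refine Submodule.mem_prod.mpr ⟨?_, trivial⟩
    rw [embed_apply]
    split_ifs with hl
    · rwa [hl, Nat.zero_mod] at hx
    · exact Submodule.zero_mem _
  · rw [← ofTakiff_toTakiff hk hsum horth (Submodule.mem_prod.mp hu).1, ofTakiff_eq_sum_embed R]
    exact Submodule.sum_mem _ fun l _ => Submodule.mem_iSup_of_mem l
      (Submodule.mem_map_of_mem (coord_mem_range (Nat.le_of_lt_succ l.isLt) u))

theorem iSupIndep_level (hk : 0 < k) (hsum : ∀ x : L, ∑ i ∈ range k, P i x = x)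
    (horth : ∀ i j, i ≠ j → ∀ x : L, P i (P j x) = 0) :
    iSupIndep fun l : Fin (k + 1) => level k P l := by
  refine iSupIndep_of_apply_eq_zero (toTakiff k P) (fun i j hij _ hu => ?_) fun i _ hu hi => ?_
  · obtain ⟨x, hx, rfl⟩ := hu
    rw [toTakiff_embed hk hsum horth j hx, Pi.single_eq_of_ne hij]
  · obtain ⟨x, hx, rfl⟩ := hu
    rw [toTakiff_embed hk hsum horth i hx, Pi.single_eq_same] at hi
    rw [hi, map_zero]

theorem sum_prodBracket_embed_coord (u v : L × L) :
    ∑ i ∈ range (k + 1), ∑ j ∈ range (k + 1),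
      (if i + j ≤ k then prodBracket (embed R i (coord k P i u)) (embed R j (coord k P j v))
        else 0) =
      ofTakiff k (takiffBracket (k + 1) (toTakiff k P u) (toTakiff k P v)) := by
  rw [ofTakiff_eq_sum_embed R, sum_map_takiffBracket (k + 1) (embed R)]
  simp only [prodBracket_embed, Nat.lt_succ_iff, toTakiff_apply]
  rw [← Fin.sum_univ_eq_sum_range]
  refine Finset.sum_congr rfl fun i _ => ?_
  exact (Fin.sum_univ_eq_sum_range (fun j => if (i : ℕ) + j ≤ k then
    embed R (i + j) ⁅coord k P i u, coord k P j v⁆ else 0) (k + 1)).symm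

end IsotropyContraction

/-- `q_i` is encoded as `range (P i)`, `q₀ ∔ q` as the submodule `q₀ × q` of `L × L`, and
`q₀ ⋉ q₁ ⋉ … ⋉ q_{k−1} ⋉ q₀` as the tuples of the Takiff algebra `q⟨k+1⟩` whose `l`-th entry lies
in `q_{l mod k}`, with the truncated bracket. -/
theorem isotropy_extended_quasi_grading_and_contraction_general
    {𝕜 L : Type*} [Field 𝕜] [LieRing L] [LieAlgebra 𝕜 L]
    (k : ℕ) (hk : 0 < k)
    (P : ℕ → (L →ₗ[𝕜] L))
    (hsum : ∀ x : L, ∑ i ∈ Finset.range k, P i x = x)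
    (horth : ∀ i j, i ≠ j → ∀ x : L, P i (P j x) = 0)
    (hgrade : ∀ i j, i < k → j < k → ∀ x y : L,
      ⁅P i x, P j y⁆ ∈ LinearMap.range (P ((i + j) % k)))
    -- the subspaces `s₀, …, s_k` of `q₀ ∔ q ⊆ L × L`
    (S : ℕ → Submodule 𝕜 (L × L))
    (hS0 : S 0 = LinearMap.range ((P 0).prod (P 0)))
    (hSmid : ∀ i, 1 ≤ i → i ≤ k - 1 →
      S i = LinearMap.range ((0 : L →ₗ[𝕜] L).prod (P i)))
    (hSk : S k = LinearMap.range ((0 : L →ₗ[𝕜] L).prod (P 0)))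
    -- the projections of `q₀ ∔ q` onto the `s_i`
    (Pr : ℕ → ((L × L) →ₗ[𝕜] (L × L)))
    (hPr0 : ∀ u : L × L, Pr 0 u = (P 0 u.1, P 0 u.1))
    (hPrmid : ∀ i, 1 ≤ i → i ≤ k - 1 → ∀ u : L × L, Pr i u = (0, P i u.2))
    (hPrk : ∀ u : L × L, Pr k u = (0, P 0 u.2 - P 0 u.1))
    -- the contracted bracket of the quasi-graded structure `Γ = {s_i}` on `q₀ ∔ q`
    (BΓ : (L × L) → (L × L) → (L × L))
    (hBΓ : ∀ u v : L × L, BΓ u v = ∑ i ∈ Finset.range (k + 1), ∑ j ∈ Finset.range (k + 1),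
      if i + j ≤ k then prodBracket (Pr i u) (Pr j v) else 0)
    -- the comparison map towards `q₀ ⋉ q₁ ⋉ … ⋉ q_{k−1} ⋉ q₀ ⊆ q⟨k+1⟩`
    (e : (L × L) →ₗ[𝕜] (Fin (k + 1) → L))
    (he : ∀ (u : L × L) (l : Fin (k + 1)),
      e u l = if (l : ℕ) = 0 then (Pr 0 u).1 else (Pr (l : ℕ) u).2) :
    -- `{s_i}` is a decomposition of `q₀ ∔ q` …
    (⨆ i : Fin (k + 1), S (i : ℕ)) = (LinearMap.range (P 0)).prod ⊤ ∧
    iSupIndep (fun i : Fin (k + 1) => S (i : ℕ)) ∧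
    -- … which is quasi-graded of order `k+1`: `[s_i, s_j] ⊆ s_{i+j}` for `i + j ≤ k`
    (∀ i j, i + j ≤ k → ∀ u v : L × L, u ∈ S i → v ∈ S j →
      prodBracket u v ∈ S (i + j)) ∧
    -- … and `e` is an isomorphism from the quasi-graded contraction of `q₀ ∔ q`
    -- onto `q₀ ⋉ q₁ ⋉ … ⋉ q_{k−1} ⋉ q₀` with its truncated (Takiff) bracket:
    (∀ u : L × L, u ∈ (LinearMap.range (P 0)).prod (⊤ : Submodule 𝕜 L) →
      ∀ l : Fin (k + 1), e u l ∈ LinearMap.range (P ((l : ℕ) % k))) ∧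
    Set.InjOn e ((LinearMap.range (P 0)).prod (⊤ : Submodule 𝕜 L)) ∧
    (∀ z : Fin (k + 1) → L, (∀ l : Fin (k + 1), z l ∈ LinearMap.range (P ((l : ℕ) % k))) →
      ∃ u ∈ (LinearMap.range (P 0)).prod (⊤ : Submodule 𝕜 L), e u = z) ∧
    (∀ u v : L × L, u ∈ (LinearMap.range (P 0)).prod (⊤ : Submodule 𝕜 L) →
      v ∈ (LinearMap.range (P 0)).prod (⊤ : Submodule 𝕜 L) →
      e (BΓ u v) = takiffBracket (k + 1) (e u) (e v)) := by
  open IsotropyContraction in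
  have hS : ∀ l ≤ k, S l = level k P l :=
    Nat.forall_le_of_zero_of_mid_of_self (by rw [hS0, level_zero])
      (fun l h1 h2 => by rw [hSmid l h1 h2, level_of_pos_of_lt h1 (by omega)])
      (by rw [hSk, level_self hk])
  have hPr : ∀ l ≤ k, ∀ u, Pr l u = embed 𝕜 l (coord k P l u) :=
    Nat.forall_le_of_zero_of_mid_of_self (fun u => by rw [hPr0, embed_coord_zero])
      (fun l h1 h2 u => by rw [hPrmid l h1 h2, embed_coord_of_pos_of_lt h1 (by omega)])
      (fun u => by rw [hPrk, embed_coord_self hk])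
  obtain rfl : e = toTakiff k P := LinearMap.ext fun u => funext fun l => by
    rw [he, toTakiff_apply]
    split_ifs with hl0
    · rw [hl0, hPr 0 k.zero_le, embed_apply, if_pos rfl]
    · rw [hPr l (Nat.le_of_lt_succ l.isLt), embed_apply]
  have hB : ∀ u v,
      BΓ u v = ofTakiff k (takiffBracket (k + 1) (toTakiff k P u) (toTakiff k P v)) := by
    intro u v
    rw [hBΓ, ← sum_prodBracket_embed_coord]
    refine sum_congr rfl fun i hi => sum_congr rfl fun j hj => ?_
    rw [hPr i (Nat.le_of_lt_succ (mem_range.mp hi)), hPr j (Nat.le_of_lt_succ (mem_range.mp hj))]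
  have hSfin : (fun l : Fin (k + 1) => S l) = fun l : Fin (k + 1) => level k P l :=
    funext fun l => hS l (Nat.le_of_lt_succ l.isLt)
  refine ⟨?_, hSfin ▸ iSupIndep_level hk hsum horth, fun i j hij u v hu hv => ?_,
    fun u _ => toTakiff_mem_range u, ?_, fun z hz => ?_, fun u v _ _ => ?_⟩
  · rw [hSfin]
    exact iSup_level hk hsum horth
  · rw [hS i (by omega)] at hu
    rw [hS j (by omega)] at hv
    rw [hS (i + j) hij]
    exact prodBracket_mem_level hk hgrade hu hv
  · exact Set.LeftInvOn.injOn fun u hu =>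
      ofTakiff_toTakiff hk hsum horth (Submodule.mem_prod.mp hu).1
  · have hz0 : (ofTakiff k z).1 ∈ LinearMap.range (P 0) := by simpa [ofTakiff] using hz 0
    exact ⟨ofTakiff k z, Submodule.mem_prod.mpr ⟨hz0, trivial⟩, toTakiff_ofTakiff hk hsum horth hz⟩
  · rw [hB, toTakiff_ofTakiff hk hsum horth
      (takiffBracket_mem_range_mod hk hgrade (toTakiff_mem_range u) (toTakiff_mem_range v))]

/-- Let `θ ∈ Aut(q)` have order `k` with eigenspace decomposition
`q = ⊕_{i ∈ ℤ_k} q_i` (encoded by the eigenprojections `P i`, `q_i = range (P i)`) and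
fixed-point subalgebra `q₀`.  Then the direct sum `q₀ ∔ q` (modelled as the subalgebra
`q₀ × q` of `L × L`) admits a quasi-graded structure of order `k+1` given by
`s₀ = {(x,x) : x ∈ q₀}`, `s_i = q_i` (`1 ≤ i ≤ k−1`) and `s_k = q₀ ⊂ q`, and the
corresponding quasi-graded contraction is isomorphic to
`q₀ ⋉ q₁ ⋉ … ⋉ q_{k−1} ⋉ q₀` (the fixed-point subalgebra `q⟨k+1⟩_0` of the Takiff
algebra `q⟨k+1⟩`, whose degree-`l` component is `q_{l mod k}`, with the truncated
bracket). -/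
theorem isotropy_extended_quasi_grading_and_contraction
    {𝕜 L : Type*} [Field 𝕜] [CharZero 𝕜] [LieRing L] [LieAlgebra 𝕜 L]
    (k : ℕ) (hk : 0 < k) (ζ : 𝕜) (hζ : IsPrimitiveRoot ζ k)
    (θ : Module.End 𝕜 L) (hbr : ∀ x y : L, θ ⁅x, y⁆ = ⁅θ x, θ y⁆)
    (hθk : θ ^ k = 1)
    (P : ℕ → (L →ₗ[𝕜] L))
    (hsum : ∀ x : L, ∑ i ∈ Finset.range k, P i x = x)
    (horth : ∀ i j, i ≠ j → ∀ x : L, P i (P j x) = 0)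
    (hPzero : ∀ i, k ≤ i → P i = 0)
    (hPeig : ∀ i, i < k → ∀ x : L, θ (P i x) = ζ ^ i • P i x)
    (hgrade : ∀ i j, i < k → j < k → ∀ x y : L,
      ⁅P i x, P j y⁆ ∈ LinearMap.range (P ((i + j) % k)))
    -- the subspaces `s₀, …, s_k` of `q₀ ∔ q ⊆ L × L`
    (S : ℕ → Submodule 𝕜 (L × L))
    (hS0 : S 0 = LinearMap.range ((P 0).prod (P 0)))
    (hSmid : ∀ i, 1 ≤ i → i ≤ k - 1 →
      S i = LinearMap.range ((0 : L →ₗ[𝕜] L).prod (P i)))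
    (hSk : S k = LinearMap.range ((0 : L →ₗ[𝕜] L).prod (P 0)))
    -- the projections of `q₀ ∔ q` onto the `s_i`
    (Pr : ℕ → ((L × L) →ₗ[𝕜] (L × L)))
    (hPr0 : ∀ u : L × L, Pr 0 u = (P 0 u.1, P 0 u.1))
    (hPrmid : ∀ i, 1 ≤ i → i ≤ k - 1 → ∀ u : L × L, Pr i u = (0, P i u.2))
    (hPrk : ∀ u : L × L, Pr k u = (0, P 0 u.2 - P 0 u.1))
    -- the contracted bracket of the quasi-graded structure `Γ = {s_i}` on `q₀ ∔ q`
    (BΓ : (L × L) → (L × L) → (L × L))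
    (hBΓ : ∀ u v : L × L, BΓ u v = ∑ i ∈ Finset.range (k + 1), ∑ j ∈ Finset.range (k + 1),
      if i + j ≤ k then prodBracket (Pr i u) (Pr j v) else 0)
    -- the comparison map towards `q₀ ⋉ q₁ ⋉ … ⋉ q_{k−1} ⋉ q₀ ⊆ q⟨k+1⟩`
    (e : (L × L) →ₗ[𝕜] (Fin (k + 1) → L))
    (he : ∀ (u : L × L) (l : Fin (k + 1)),
      e u l = if (l : ℕ) = 0 then (Pr 0 u).1 else (Pr (l : ℕ) u).2) :
    -- `{s_i}` is a decomposition of `q₀ ∔ q` …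
    (⨆ i : Fin (k + 1), S (i : ℕ)) = (LinearMap.range (P 0)).prod ⊤ ∧
    iSupIndep (fun i : Fin (k + 1) => S (i : ℕ)) ∧
    -- … which is quasi-graded of order `k+1`: `[s_i, s_j] ⊆ s_{i+j}` for `i + j ≤ k`
    (∀ i j, i + j ≤ k → ∀ u v : L × L, u ∈ S i → v ∈ S j →
      prodBracket u v ∈ S (i + j)) ∧
    -- … and `e` is an isomorphism from the quasi-graded contraction of `q₀ ∔ q`
    -- onto `q₀ ⋉ q₁ ⋉ … ⋉ q_{k−1} ⋉ q₀` with its truncated (Takiff) bracket: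
    (∀ u : L × L, u ∈ (LinearMap.range (P 0)).prod (⊤ : Submodule 𝕜 L) →
      ∀ l : Fin (k + 1), e u l ∈ LinearMap.range (P ((l : ℕ) % k))) ∧
    Set.InjOn e ((LinearMap.range (P 0)).prod (⊤ : Submodule 𝕜 L)) ∧
    (∀ z : Fin (k + 1) → L, (∀ l : Fin (k + 1), z l ∈ LinearMap.range (P ((l : ℕ) % k))) →
      ∃ u ∈ (LinearMap.range (P 0)).prod (⊤ : Submodule 𝕜 L), e u = z) ∧
    (∀ u v : L × L, u ∈ (LinearMap.range (P 0)).prod (⊤ : Submodule 𝕜 L) →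
      v ∈ (LinearMap.range (P 0)).prod (⊤ : Submodule 𝕜 L) →
      e (BΓ u v) = takiffBracket (k + 1) (e u) (e v)) :=
  isotropy_extended_quasi_grading_and_contraction_general k hk P hsum horth hgrade S hS0 hSmid hSk
    Pr hPr0 hPrmid hPrk BΓ hBΓ e he
end

section
/- For F in the Poisson center of S(q), the component gr^•F of F of maximal Γ-degree lies in the Poisson center of S(C_Γ(q)); likewise, for F ∈ k[q]^q, the component gr_•F of minimal Γ-degree is an invariant of the adjoint representation of C_Γ(q). -/
open Finset Module MvPolynomial

section Defs

variable {𝕜 L ι : Type*} [Field 𝕜] [LieRing L] [LieAlgebra 𝕜 L]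
  [Fintype ι] [DecidableEq ι]

/-- The Poisson bracket on `S(q)`, realised on `MvPolynomial ι 𝕜` via a basis `b` of `q`:
`{F, G} = ∑_{i,j} ∂F/∂Xᵢ · ∂G/∂Xⱼ · ([bᵢ, bⱼ] written in coordinates)`. -/
noncomputable def poissonBracket (b : Basis ι 𝕜 L) (F G : MvPolynomial ι 𝕜) :
    MvPolynomial ι 𝕜 :=
  ∑ i : ι, ∑ j : ι, pderiv i F * pderiv j G *
    ∑ l : ι, C (b.repr ⁅b i, b j⁆ l) * X l

/-- The Poisson bracket of the quasi-graded contraction `C_Γ(q)`: the structure constants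
are those of `q` when `deg i + deg j ≤ k − 1` and `0` otherwise. -/
noncomputable def contractedPoissonBracket (b : Basis ι 𝕜 L) (deg : ι → ℕ) (k : ℕ)
    (F G : MvPolynomial ι 𝕜) : MvPolynomial ι 𝕜 :=
  ∑ i : ι, ∑ j : ι, pderiv i F * pderiv j G *
    (if deg i + deg j ≤ k - 1 then ∑ l : ι, C (b.repr ⁅b i, b j⁆ l) * X l else 0)

/-- The adjoint action of the basis vector `bᵢ ∈ q` on `𝕜[q]` (realised on
`MvPolynomial ι 𝕜` via the structure constants of `q`). -/
noncomputable def adAction (b : Basis ι 𝕜 L) (i : ι) (F : MvPolynomial ι 𝕜) :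
    MvPolynomial ι 𝕜 :=
  ∑ l : ι, pderiv l F * ∑ j : ι, C (b.repr ⁅b i, b j⁆ l) * X j

/-- The adjoint action of the basis vector `bᵢ` for the contracted Lie algebra
`C_Γ(q)` on `𝕜[C_Γ(q)]`. -/
noncomputable def contractedAdAction (b : Basis ι 𝕜 L) (deg : ι → ℕ) (k : ℕ) (i : ι)
    (F : MvPolynomial ι 𝕜) : MvPolynomial ι 𝕜 :=
  ∑ l : ι, pderiv l F *
    ∑ j : ι, C (if deg i + deg j ≤ k - 1 then b.repr ⁅b i, b j⁆ l else 0) * X j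

end Defs

/-!
In coordinates, `{F, x_j}` and `ad(x_i) F` are linear vector fields whose coefficients are the
structure constants of `q`. Split these constants into the ones kept by the contraction and the
ones it discards. A kept constant `c_{ij}^l ≠ 0` has `deg l = deg i + deg j`, so its part of the
vector field shifts the `Γ`-degree by exactly `+deg j` (resp. `-deg i`). A discarded one has
`deg l < k ≤ deg i + deg j`, so its part shifts the degree strictly less (resp. strictly more).
Hence the top-degree component of `{F, x_j}` is the contracted bracket of `gr^•F` with `x_j`, and
the bottom-degree component of `ad(x_i) F` is the contracted action on `gr_•F`. Both vanish when
`F` is invariant.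
-/

namespace MvPolynomial

variable {R σ : Type*} [CommSemiring R] {w : σ → ℕ}

theorem IsWeightedHomogeneous.pderiv_eq_zero_of_lt {P : MvPolynomial σ R} {n : ℕ} {x : σ}
    (hP : P.IsWeightedHomogeneous w n) (hn : n < w x) : pderiv x P = 0 := by
  induction hP using IsWeightedHomogeneous.induction_on with
  | zero => exact map_zero _
  | add _ _ _ _ hp hq => rw [map_add, hp, hq, add_zero]
  | monomial d r hd =>
    have hdx : d x = 0 := by
      by_contra hdx
      exact absurd (Finsupp.le_weight_of_ne_zero' w hdx) (by omega)
    rw [pderiv_monomial, hdx, Nat.cast_zero, mul_zero, monomial_zero]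

theorem IsWeightedHomogeneous.pderiv_mul_X {P : MvPolynomial σ R} {n : ℕ} {x : σ}
    (hP : P.IsWeightedHomogeneous w (n + w x)) (y : σ) :
    (pderiv x P * X y).IsWeightedHomogeneous w (n + w y) :=
  (hP.pderiv rfl).mul (isWeightedHomogeneous_X R w y)

theorem sum_range_weightedHomogeneousComponent (P : MvPolynomial σ R) :
    ∑ n ∈ range (weightedTotalDegree w P + 1), weightedHomogeneousComponent w n P = P := by
  conv_rhs => rw [← sum_weightedHomogeneousComponent w P]
  refine (finsum_eq_sum_of_support_subset _ fun n hn => ?_).symm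
  have : ¬ weightedTotalDegree w P < n := fun h => hn (weightedHomogeneousComponent_eq_zero n P h)
  simp only [coe_range, Set.mem_Iio]
  omega

section LeadingTerm

variable {Ψ Θ : MvPolynomial σ R →ₗ[R] MvPolynomial σ R}

theorem weightedHomogeneousComponent_add_apply_top {s : ℕ}
    (hΨ : ∀ n P, P.IsWeightedHomogeneous w n → (Ψ P).IsWeightedHomogeneous w (n + s))
    (hΘ : ∀ n P, P.IsWeightedHomogeneous w n →
      ∀ m, n + s ≤ m → weightedHomogeneousComponent w m (Θ P) = 0)
    (F : MvPolynomial σ R) :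
    weightedHomogeneousComponent w (weightedTotalDegree w F + s) ((Ψ + Θ) F) =
      Ψ (weightedHomogeneousComponent w (weightedTotalDegree w F) F) := by
  set d := weightedTotalDegree w F
  have hcomp := weightedHomogeneousComponent_isWeightedHomogeneous (w := w) (φ := F)
  conv_lhs => rw [← sum_range_weightedHomogeneousComponent (w := w) F]
  rw [map_sum, map_sum, sum_eq_single_of_mem d (self_mem_range_succ d)]
  · rw [LinearMap.add_apply, map_add, hΘ d _ (hcomp d) _ le_rfl, add_zero,
      (hΨ d _ (hcomp d)).weightedHomogeneousComponent_same]
  · intro n hn hnd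
    have hnd' : n < d := lt_of_le_of_ne (Nat.lt_succ_iff.mp (mem_range.mp hn)) hnd
    rw [LinearMap.add_apply, map_add, hΘ n _ (hcomp n) _ (by omega), add_zero,
      (hΨ n _ (hcomp n)).weightedHomogeneousComponent_ne _ (by omega)]

theorem weightedHomogeneousComponent_add_apply_bottom {t e : ℕ}
    (hΨ : ∀ n P, P.IsWeightedHomogeneous w (n + t) → (Ψ P).IsWeightedHomogeneous w n)
    (hΘ : ∀ n P, P.IsWeightedHomogeneous w (n + t) →
      ∀ m ≤ n, weightedHomogeneousComponent w m (Θ P) = 0)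
    {F : MvPolynomial σ R} (hF : ∀ n < e + t, weightedHomogeneousComponent w n F = 0) :
    weightedHomogeneousComponent w e ((Ψ + Θ) F) =
      Ψ (weightedHomogeneousComponent w (e + t) F) := by
  have hcomp := weightedHomogeneousComponent_isWeightedHomogeneous (w := w) (φ := F)
  conv_lhs => rw [← sum_range_weightedHomogeneousComponent (w := w) F]
  rw [map_sum, map_sum, sum_eq_single (e + t)]
  · rw [LinearMap.add_apply, map_add, hΘ e _ (hcomp _) _ le_rfl, add_zero,
      (hΨ e _ (hcomp _)).weightedHomogeneousComponent_same]
  · intro n _ hne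
    rcases lt_or_gt_of_ne hne with hlt | hgt
    · rw [hF n hlt, map_zero, map_zero]
    obtain ⟨n', rfl⟩ : ∃ n', n = n' + t := ⟨n - t, by omega⟩
    rw [LinearMap.add_apply, map_add, hΘ n' _ (hcomp _) _ (by omega), add_zero,
      (hΨ n' _ (hcomp _)).weightedHomogeneousComponent_ne _ (by omega)]
  · intro hnot
    rw [weightedHomogeneousComponent_eq_zero (e + t) F (by simpa using hnot), map_zero, map_zero]

end LeadingTerm

variable [Fintype σ]

/-- The vector field `∑ A x y • X y ∂/∂X x`. -/
noncomputable def linearVectorField (A : σ → σ → R) : MvPolynomial σ R →ₗ[R] MvPolynomial σ R :=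
  ∑ x, ∑ y, A x y • (LinearMap.mulRight R (X y) ∘ₗ (pderiv x).toLinearMap)

theorem linearVectorField_apply (A : σ → σ → R) (P : MvPolynomial σ R) :
    linearVectorField A P = ∑ x, ∑ y, A x y • (pderiv x P * X y) := by
  simp [linearVectorField, LinearMap.sum_apply]

theorem linearVectorField_eq_add_ite (A : σ → σ → R) (p : σ → σ → Prop) [DecidableRel p] :
    linearVectorField A = linearVectorField (fun x y => if p x y then A x y else 0) +
      linearVectorField (fun x y => if p x y then 0 else A x y) := by
  simp only [linearVectorField, ← sum_add_distrib, ← add_smul]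
  congr! 3 with x _ y _
  split_ifs <;> simp

theorem IsWeightedHomogeneous.linearVectorField_eq_zero {A : σ → σ → R} {P : MvPolynomial σ R}
    {n : ℕ} (hP : P.IsWeightedHomogeneous w n) (hA : ∀ x y, A x y ≠ 0 → n < w x) :
    linearVectorField A P = 0 := by
  rw [linearVectorField_apply]
  refine sum_eq_zero fun x _ => sum_eq_zero fun y _ => ?_
  by_cases hAxy : A x y = 0
  · rw [hAxy, zero_smul]
  · rw [hP.pderiv_eq_zero_of_lt (hA x y hAxy), zero_mul, smul_zero]

theorem IsWeightedHomogeneous.linearVectorField {A : σ → σ → R} {P : MvPolynomial σ R} {n m : ℕ}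
    (hP : P.IsWeightedHomogeneous w n) (hA : ∀ x y, A x y ≠ 0 → w x ≤ n → n + w y = m + w x) :
    (linearVectorField A P).IsWeightedHomogeneous w m := by
  rw [linearVectorField_apply]
  refine .sum _ _ _ fun x _ => .sum _ _ _ fun y _ => ?_
  by_cases hAxy : A x y = 0
  · rw [hAxy, zero_smul]; exact isWeightedHomogeneous_zero R w m
  rcases le_or_gt (w x) n with hx | hx
  · obtain ⟨n', rfl⟩ := Nat.exists_eq_add_of_le' hx
    rw [smul_eq_C_mul]
    refine .C_mul ?_ _
    convert hP.pderiv_mul_X y using 1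
    have := hA x y hAxy hx
    omega
  · rw [hP.pderiv_eq_zero_of_lt hx, zero_mul, smul_zero]; exact isWeightedHomogeneous_zero R w m

theorem IsWeightedHomogeneous.weightedHomogeneousComponent_linearVectorField_eq_zero
    {A : σ → σ → R} {P : MvPolynomial σ R} {n m : ℕ} (hP : P.IsWeightedHomogeneous w n)
    (hA : ∀ x y, A x y ≠ 0 → w x ≤ n → n + w y ≠ m + w x) :
    weightedHomogeneousComponent w m (MvPolynomial.linearVectorField A P) = 0 := by
  simp only [linearVectorField_apply, map_sum]
  refine sum_eq_zero fun x _ => sum_eq_zero fun y _ => ?_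
  by_cases hAxy : A x y = 0
  · rw [hAxy, zero_smul, map_zero]
  rcases le_or_gt (w x) n with hx | hx
  · obtain ⟨n', rfl⟩ := Nat.exists_eq_add_of_le' hx
    rw [smul_eq_C_mul, weightedHomogeneousComponent_C_mul,
      (hP.pderiv_mul_X y).weightedHomogeneousComponent_ne m, mul_zero]
    have := hA x y hAxy hx
    omega
  · rw [hP.pderiv_eq_zero_of_lt hx, zero_mul, smul_zero, map_zero]

end MvPolynomial


section Contraction

variable {𝕜 L ι : Type*} [Field 𝕜] [LieRing L] [LieAlgebra 𝕜 L] [Fintype ι] (b : Basis ι 𝕜 L)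

/-- `[q_i, q_j] ⊆ q_{i+j}` whenever `i + j < k`, for the basis `b` with `b l ∈ q_{deg l}`. -/
def IsQuasiGradedBasis (deg : ι → ℕ) (k : ℕ) : Prop :=
  ∀ i j : ι, deg i + deg j ≤ k - 1 → ∀ l : ι, b.repr ⁅b i, b j⁆ l ≠ 0 → deg l = deg i + deg j

theorem adAction_eq_linearVectorField (i : ι) (F : MvPolynomial ι 𝕜) :
    adAction b i F = linearVectorField (fun l j => b.repr ⁅b i, b j⁆ l) F := by
  simp only [adAction, linearVectorField_apply, mul_sum, smul_eq_C_mul]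
  exact sum_congr rfl fun _ _ => sum_congr rfl fun _ _ => by ring

theorem contractedAdAction_eq_linearVectorField (deg : ι → ℕ) (k : ℕ) (i : ι)
    (F : MvPolynomial ι 𝕜) :
    contractedAdAction b deg k i F = linearVectorField
      (fun l j => if deg i + deg j ≤ k - 1 then b.repr ⁅b i, b j⁆ l else 0) F := by
  simp only [contractedAdAction, linearVectorField_apply, mul_sum, smul_eq_C_mul]
  exact sum_congr rfl fun _ _ => sum_congr rfl fun _ _ => by ring

theorem contractedPoissonBracket_eq_sum (deg : ι → ℕ) (k : ℕ) (P G : MvPolynomial ι 𝕜) :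
    contractedPoissonBracket b deg k P G = ∑ j, pderiv j G *
      linearVectorField (fun i l => if deg i + deg j ≤ k - 1 then b.repr ⁅b i, b j⁆ l else 0) P := by
  simp only [contractedPoissonBracket, linearVectorField_apply, mul_sum, smul_eq_C_mul]
  rw [sum_comm]
  refine sum_congr rfl fun j _ => sum_congr rfl fun i _ => ?_
  split_ifs
  · rw [mul_sum]
    exact sum_congr rfl fun _ _ => by ring
  · simp

theorem poissonBracket_X_right [DecidableEq ι] (F : MvPolynomial ι 𝕜) (j : ι) :
    poissonBracket b F (X j) = linearVectorField (fun i l => b.repr ⁅b i, b j⁆ l) F := by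
  simp only [poissonBracket, pderiv_X, Pi.single_apply, mul_ite, mul_one, mul_zero, ite_mul,
    zero_mul, sum_ite_eq, mem_univ, if_true]
  simp only [linearVectorField_apply, mul_sum, smul_eq_C_mul]
  exact sum_congr rfl fun _ _ => sum_congr rfl fun _ _ => by ring

variable {b} {deg : ι → ℕ} {k : ℕ}

theorem IsQuasiGradedBasis.contractedAdAction_eq_zero (hgrade : IsQuasiGradedBasis b deg k)
    {P : MvPolynomial ι 𝕜} {m : ℕ} (hP : P.IsWeightedHomogeneous deg m) {i : ι} (hm : m < deg i) :
    contractedAdAction b deg k i P = 0 := by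
  rw [contractedAdAction_eq_linearVectorField]
  refine hP.linearVectorField_eq_zero fun l j hA => ?_
  obtain ⟨h, hA⟩ := ite_ne_right_iff.mp hA
  have := hgrade i j h l hA
  omega

theorem IsQuasiGradedBasis.weightedHomogeneousComponent_adAction
    (hgrade : IsQuasiGradedBasis b deg k) (hdeg : ∀ i, deg i < k) (i : ι) {e : ℕ}
    {F : MvPolynomial ι 𝕜} (hF : ∀ n < e + deg i, weightedHomogeneousComponent deg n F = 0) :
    weightedHomogeneousComponent deg e (adAction b i F) =
      contractedAdAction b deg k i (weightedHomogeneousComponent deg (e + deg i) F) := by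
  rw [adAction_eq_linearVectorField, contractedAdAction_eq_linearVectorField,
    linearVectorField_eq_add_ite _ fun _ j => deg i + deg j ≤ k - 1]
  refine weightedHomogeneousComponent_add_apply_bottom (fun n P hP => hP.linearVectorField ?_)
    (fun n P hP m hm => hP.weightedHomogeneousComponent_linearVectorField_eq_zero ?_) hF
  · intro l j hA _
    obtain ⟨h, hA⟩ := ite_ne_right_iff.mp hA
    have := hgrade i j h l hA
    omega
  · intro l j hA _
    obtain ⟨h, -⟩ := ite_ne_left_iff.mp hA
    have := hdeg l
    omega

theorem IsQuasiGradedBasis.weightedHomogeneousComponent_poissonBracket_X_right [DecidableEq ι]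
    (hgrade : IsQuasiGradedBasis b deg k) (hdeg : ∀ i, deg i < k) (F : MvPolynomial ι 𝕜) (j : ι) :
    weightedHomogeneousComponent deg (weightedTotalDegree deg F + deg j) (poissonBracket b F (X j)) =
      linearVectorField (fun i l => if deg i + deg j ≤ k - 1 then b.repr ⁅b i, b j⁆ l else 0)
        (weightedHomogeneousComponent deg (weightedTotalDegree deg F) F) := by
  rw [poissonBracket_X_right, linearVectorField_eq_add_ite _ fun i _ => deg i + deg j ≤ k - 1]
  refine weightedHomogeneousComponent_add_apply_top (fun n P hP => hP.linearVectorField ?_)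
    (fun n P hP m hm => hP.weightedHomogeneousComponent_linearVectorField_eq_zero ?_) F
  · intro i l hA _
    obtain ⟨h, hA⟩ := ite_ne_right_iff.mp hA
    have := hgrade i j h l hA
    omega
  · intro i l hA _
    obtain ⟨h, -⟩ := ite_ne_left_iff.mp hA
    have := hdeg l
    omega

end Contraction

theorem graded_components_of_invariants_are_invariants_of_contraction_general
    {𝕜 L ι : Type*} [Field 𝕜] [LieRing L] [LieAlgebra 𝕜 L]
    [Fintype ι] [DecidableEq ι]
    (b : Basis ι 𝕜 L) (k : ℕ)
    (deg : ι → ℕ) (hdeg : ∀ i, deg i < k)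
    -- the quasi-grading condition `[q_i, q_j] ⊆ q_{i+j}` for `i + j ≤ k − 1`
    (hgrade : ∀ i j : ι, deg i + deg j ≤ k - 1 →
      ∀ l : ι, b.repr ⁅b i, b j⁆ l ≠ 0 → deg l = deg i + deg j)
    (F : MvPolynomial ι 𝕜) :
    -- (i) Poisson centre and components of maximal Γ-degree
    ((∀ G : MvPolynomial ι 𝕜, poissonBracket b F G = 0) →
      ∀ G : MvPolynomial ι 𝕜, contractedPoissonBracket b deg k
        (weightedHomogeneousComponent deg (weightedTotalDegree deg F) F) G = 0) ∧
    -- (ii) adjoint invariants and components of minimal Γ-degree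
    ((∀ i : ι, adAction b i F = 0) →
      ∀ i : ι, contractedAdAction b deg k i
        (weightedHomogeneousComponent deg
          (sInf {n : ℕ | weightedHomogeneousComponent deg n F ≠ 0}) F) = 0) := by
  have hgrade : IsQuasiGradedBasis b deg k := hgrade
  refine ⟨fun hF G => ?_, fun hF i => ?_⟩
  · rw [contractedPoissonBracket_eq_sum]
    refine sum_eq_zero fun j _ => ?_
    rw [← hgrade.weightedHomogeneousComponent_poissonBracket_X_right hdeg, hF, map_zero, mul_zero]
  · set m := sInf {n : ℕ | weightedHomogeneousComponent deg n F ≠ 0}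
    have hbelow : ∀ n < m, weightedHomogeneousComponent deg n F = 0 := fun n hn =>
      not_not.mp fun h => (Nat.sInf_le h).not_gt hn
    rcases lt_or_ge m (deg i) with him | him
    · exact hgrade.contractedAdAction_eq_zero
        (weightedHomogeneousComponent_isWeightedHomogeneous m F) him
    · have := hgrade.weightedHomogeneousComponent_adAction hdeg i (e := m - deg i)
        (by rwa [Nat.sub_add_cancel him])
      rwa [Nat.sub_add_cancel him, hF, map_zero, eq_comm] at this

/-- Let `Γ = {q_i}_{i<k}` be a quasi-graded structure on `q`, encoded by
a basis `b` adapted to the decomposition (`b l ∈ q_{deg l}`).  If `F` lies in the Poisson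
centre of `S(q)`, then the component `gr^•F` of `F` of maximal `Γ`-degree lies in the
Poisson centre of `S(C_Γ(q))`; likewise, if `F ∈ 𝕜[q]^q` is an invariant of the adjoint
representation, then the component `gr_•F` of minimal `Γ`-degree is an invariant of the
adjoint representation of `C_Γ(q)`. -/
theorem graded_components_of_invariants_are_invariants_of_contraction
    {𝕜 L ι : Type*} [Field 𝕜] [CharZero 𝕜] [LieRing L] [LieAlgebra 𝕜 L]
    [FiniteDimensional 𝕜 L] [Fintype ι] [DecidableEq ι]
    (b : Basis ι 𝕜 L) (k : ℕ) (hk : 0 < k)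
    (deg : ι → ℕ) (hdeg : ∀ i, deg i < k)
    -- the quasi-grading condition `[q_i, q_j] ⊆ q_{i+j}` for `i + j ≤ k − 1`
    (hgrade : ∀ i j : ι, deg i + deg j ≤ k - 1 →
      ∀ l : ι, b.repr ⁅b i, b j⁆ l ≠ 0 → deg l = deg i + deg j)
    (F : MvPolynomial ι 𝕜) :
    -- (i) Poisson centre and components of maximal Γ-degree
    ((∀ G : MvPolynomial ι 𝕜, poissonBracket b F G = 0) →
      ∀ G : MvPolynomial ι 𝕜, contractedPoissonBracket b deg k
        (weightedHomogeneousComponent deg (weightedTotalDegree deg F) F) G = 0) ∧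
    -- (ii) adjoint invariants and components of minimal Γ-degree
    ((∀ i : ι, adAction b i F = 0) →
      ∀ i : ι, contractedAdAction b deg k i
        (weightedHomogeneousComponent deg
          (sInf {n : ℕ | weightedHomogeneousComponent deg n F ≠ 0}) F) = 0) :=
  graded_components_of_invariants_are_invariants_of_contraction_general b k deg hdeg hgrade F
end

section
/- Let θ ∈ Aut(q) have order k and ζ = μ^n where μ is a primitive nk-th root of unity. Define θ̃ on n·q = q ∔ … ∔ q by θ̃(a_1,…,a_n) = (a_2,…,a_n, ζ^i a_1) for (a_1,…,a_n) ∈ n(q_i). Then θ̃ is a Lie algebra automorphism of n·q of order nk, and for each j ∈ ℤ_{nk}, the μ^j-eigenspace of θ̃ equals {(x, μ^j x, …, μ^{(n−1)j} x) : x ∈ q_{j̄}}, which is isomorphic as a q_0-module to q_{j̄}, where j̄ is the image of j in ℤ_k. -/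
/-!
Everything is a statement about the shift `(a₀, …, aₙ₋₁) ↦ (a₁, …, aₙ₋₁, f a₀)` for an
arbitrary map `f`. Its `m`-th iterate sends `a` to `l ↦ f^[(l + m) / n] a_{(l + m) % n}`, so it
is the identity exactly when `n ∣ m` and `f^[m / n] = id`; this gives the order `nk`. It
commutes with every componentwise operation that `f` preserves, which gives linearity and the
bracket. An eigenvector for `c` satisfies `a_{l+1} = c • a_l`, hence `a_l = cˡ • a₀`, and the
last coordinate forces `f a₀ = cⁿ • a₀`; with `c = μʲ` this is the eigenspace description.
-/

def cyclicExtension {α : Type*} {n : ℕ} (hn : 0 < n) (f : α → α) (a : Fin n → α) : Fin n → α :=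
  fun l => if h : (l : ℕ) + 1 < n then a ⟨l + 1, h⟩ else f (a ⟨0, hn⟩)

section cyclicExtension

variable {α : Type*} {n : ℕ} (hn : 0 < n) (f : α → α)

theorem cyclicExtension_iterate_apply (m : ℕ) (a : Fin n → α) (l : Fin n) :
    (cyclicExtension hn f)^[m] a l = f^[(l + m) / n] (a ⟨(l + m) % n, Nat.mod_lt _ hn⟩) := by
  induction m generalizing l with
  | zero =>
    simp only [Function.iterate_zero, id_eq, add_zero, Nat.div_eq_of_lt l.isLt,
      Nat.mod_eq_of_lt l.isLt]
  | succ m ih =>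
    rw [Function.iterate_succ_apply', cyclicExtension]
    split_ifs with h
    · rw [ih]
      simp only [add_comm, add_left_comm]
    · have hl : (l : ℕ) + (m + 1) = m + n := by omega
      simp only [ih, hl, Nat.add_div_right _ hn, Nat.add_mod_right, Function.iterate_succ_apply',
        zero_add]

theorem cyclicExtension_iterate_mul_apply (k : ℕ) (a : Fin n → α) (l : Fin n) :
    (cyclicExtension hn f)^[n * k] a l = f^[k] (a l) := by
  rw [cyclicExtension_iterate_apply, Nat.add_mul_div_left _ _ hn, Nat.div_eq_of_lt l.isLt,
    zero_add]
  congr 2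
  ext
  simp [Nat.mod_eq_of_lt l.isLt]

theorem cyclicExtension_iterate_eq_id_iff [Nontrivial α] (j : ℕ) :
    (cyclicExtension hn f)^[j] = id ↔ n ∣ j ∧ f^[j / n] = id := by
  constructor
  · intro hj
    have hj_apply (a : Fin n → α) :
        f^[j / n] (a ⟨j % n, Nat.mod_lt _ hn⟩) = a ⟨0, hn⟩ := by
      simpa [cyclicExtension_iterate_apply] using congrFun (congrFun hj a) ⟨0, hn⟩
    have hdvd : n ∣ j := by
      refine Nat.dvd_of_mod_eq_zero (by_contra fun hr => ?_)
      obtain ⟨u, v, huv⟩ := exists_pair_ne α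
      have hu := hj_apply fun l => if (l : ℕ) = 0 then u else v
      have hv := hj_apply fun _ => v
      simp only [hr, if_false, if_true] at hu
      exact huv (hu.symm.trans hv)
    refine ⟨hdvd, funext fun x => ?_⟩
    simpa [Nat.mod_eq_zero_of_dvd hdvd] using hj_apply fun _ => x
  · rintro ⟨⟨k, rfl⟩, hk⟩
    rw [Nat.mul_div_cancel_left _ hn] at hk
    funext a l
    simp [cyclicExtension_iterate_mul_apply, hk]

theorem cyclicExtension_map₂ (op : α → α → α) (hf : ∀ x y, f (op x y) = op (f x) (f y))
    (a a' : Fin n → α) :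
    cyclicExtension hn f (fun l => op (a l) (a' l)) =
      fun l => op (cyclicExtension hn f a l) (cyclicExtension hn f a' l) := by
  funext l
  by_cases h : (l : ℕ) + 1 < n <;> simp [cyclicExtension, h, hf]

theorem cyclicExtension_eq_smul_iff {R : Type*} [Monoid R] [MulAction R α] (c : R)
    (a : Fin n → α) :
    cyclicExtension hn f a = c • a ↔
      ∃ x, f x = c ^ n • x ∧ ∀ l : Fin n, a l = c ^ (l : ℕ) • x := by
  constructor
  · intro ha
    have hpow : ∀ (i : ℕ) (hi : i < n), a ⟨i, hi⟩ = c ^ i • a ⟨0, hn⟩ := by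
      intro i
      induction i with
      | zero => simp
      | succ i ih =>
        intro hi
        have hstep := congrFun ha ⟨i, by omega⟩
        simp only [cyclicExtension, hi, dif_pos, Pi.smul_apply] at hstep
        rw [hstep, ih, smul_smul, ← pow_succ']
    refine ⟨a ⟨0, hn⟩, ?_, fun l => hpow l l.isLt⟩
    have hlast := congrFun ha ⟨n - 1, by omega⟩
    simp only [cyclicExtension, Nat.sub_add_cancel hn, lt_irrefl, dite_false,
      Pi.smul_apply] at hlast
    rw [hlast, hpow, smul_smul, ← pow_succ', Nat.sub_add_cancel hn]
  · rintro ⟨x, hx, hax⟩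
    funext l
    by_cases h : (l : ℕ) + 1 < n
    · simp [cyclicExtension, h, hax, smul_smul, ← pow_succ']
    · have hl : (l : ℕ) + 1 = n := by omega
      simp [cyclicExtension, hax, hx, smul_smul, ← pow_succ', hl]

end cyclicExtension

theorem cyclic_extension_automorphism_order_and_eigenspaces_general
    {𝕜 L : Type*} [Field 𝕜] [LieRing L] [LieAlgebra 𝕜 L] [Nontrivial L]
    (n k : ℕ) (hn : 0 < n)
    (μ : 𝕜)
    (θ : L ≃ₗ[𝕜] L) (hbr : ∀ x y : L, θ ⁅x, y⁆ = ⁅θ x, θ y⁆)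
    (hθk : (⇑θ)^[k] = id) (hθmin : ∀ j, 0 < j → j < k → (⇑θ)^[j] ≠ id)
    (Θ : (Fin n → L) → (Fin n → L))
    (hΘ : ∀ (a : Fin n → L) (l : Fin n), Θ a l =
      if h : (l : ℕ) + 1 < n then a ⟨(l : ℕ) + 1, h⟩ else θ (a ⟨0, hn⟩)) :
    -- `θ̃` is linear …
    (∀ (c : 𝕜) (a a' : Fin n → L), Θ (c • a + a') = c • Θ a + Θ a') ∧
    -- … respects the (componentwise) bracket of `n·q`, hence is an automorphism …
    (∀ a a' : Fin n → L, Θ (fun l => ⁅a l, a' l⁆) = fun l => ⁅Θ a l, Θ a' l⁆) ∧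
    -- … of order exactly `nk`
    Θ^[n * k] = id ∧
    (∀ j, 0 < j → j < n * k → Θ^[j] ≠ id) ∧
    -- the `μʲ`-eigenspace of `θ̃` is `{(x, μʲ x, …, μ^{(n−1)j} x) : x ∈ q_{j̄}}`
    (∀ j : ℕ, {a : Fin n → L | Θ a = μ ^ j • a} =
      {a : Fin n → L | ∃ x : L, θ x = (μ ^ n) ^ j • x ∧
        ∀ l : Fin n, a l = μ ^ ((l : ℕ) * j) • x}) ∧
    -- the parametrisation `x ↦ (x, μʲx, …)` is injective and `q₀`-equivariant,
    -- so each eigenspace is isomorphic to `q_{j̄}` as a `q₀`-module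
    (∀ (j : ℕ) (x y : L),
      (fun l : Fin n => μ ^ ((l : ℕ) * j) • x) = (fun l : Fin n => μ ^ ((l : ℕ) * j) • y) →
      x = y) ∧
    (∀ (j : ℕ) (z x : L), θ z = z →
      (fun l : Fin n => ⁅z, μ ^ ((l : ℕ) * j) • x⁆) =
        (fun l : Fin n => μ ^ ((l : ℕ) * j) • ⁅z, x⁆)) := by
  obtain rfl : Θ = cyclicExtension hn θ := funext fun a => funext (hΘ a)
  refine ⟨fun c a a' => cyclicExtension_map₂ hn θ (fun x y => c • x + y) (by simp) a a',
    fun a a' => cyclicExtension_map₂ hn θ (fun x y => ⁅x, y⁆) hbr a a', ?_, ?_, ?_, ?_, ?_⟩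
  · rw [cyclicExtension_iterate_eq_id_iff, Nat.mul_div_cancel_left _ hn]
    exact ⟨dvd_mul_right n k, hθk⟩
  · intro j hj hjnk hid
    obtain ⟨⟨i, rfl⟩, hi⟩ := (cyclicExtension_iterate_eq_id_iff hn θ j).mp hid
    rw [Nat.mul_div_cancel_left _ hn] at hi
    exact hθmin i (Nat.pos_of_mul_pos_left hj) (Nat.lt_of_mul_lt_mul_left hjnk) hi
  · intro j
    ext a
    simp only [Set.mem_ofPred_eq, cyclicExtension_eq_smul_iff, ← pow_mul, mul_comm n j,
      mul_comm _ j]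
  · intro j x y h
    simpa using congrFun h ⟨0, hn⟩
  · exact fun j z x _ => funext fun l => lie_smul _ _ _

/-- Let `θ ∈ Aut(q)` have order `k`, `μ` a primitive `nk`-th root of
unity and `ζ = μⁿ`.  The map `θ̃` on `n·q = q ∔ … ∔ q` given on `n(q_i)` by
`θ̃(a₁,…,aₙ) = (a₂,…,aₙ, ζⁱ a₁)` — globally, `θ̃(a₁,…,aₙ) = (a₂,…,aₙ, θ(a₁))` — is a
Lie algebra automorphism of `n·q` of order `nk`, and for each `j` its `μʲ`-eigenspace is
`{(x, μʲx, …, μ^{(n−1)j}x) : x ∈ q_{j̄}}`, which is isomorphic as a `q₀`-module to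
`q_{j̄}` (where `j̄ = j mod k`, i.e. `q_{j̄}` is the `ζʲ`-eigenspace of `θ`). -/
theorem cyclic_extension_automorphism_order_and_eigenspaces
    {𝕜 L : Type*} [Field 𝕜] [CharZero 𝕜] [LieRing L] [LieAlgebra 𝕜 L] [Nontrivial L]
    (n k : ℕ) (hn : 0 < n) (hk : 0 < k)
    (μ : 𝕜) (hμ : IsPrimitiveRoot μ (n * k))
    (θ : L ≃ₗ[𝕜] L) (hbr : ∀ x y : L, θ ⁅x, y⁆ = ⁅θ x, θ y⁆)
    (hθk : (⇑θ)^[k] = id) (hθmin : ∀ j, 0 < j → j < k → (⇑θ)^[j] ≠ id)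
    (Θ : (Fin n → L) → (Fin n → L))
    (hΘ : ∀ (a : Fin n → L) (l : Fin n), Θ a l =
      if h : (l : ℕ) + 1 < n then a ⟨(l : ℕ) + 1, h⟩ else θ (a ⟨0, hn⟩)) :
    -- `θ̃` is linear …
    (∀ (c : 𝕜) (a a' : Fin n → L), Θ (c • a + a') = c • Θ a + Θ a') ∧
    -- … respects the (componentwise) bracket of `n·q`, hence is an automorphism …
    (∀ a a' : Fin n → L, Θ (fun l => ⁅a l, a' l⁆) = fun l => ⁅Θ a l, Θ a' l⁆) ∧
    -- … of order exactly `nk`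
    Θ^[n * k] = id ∧
    (∀ j, 0 < j → j < n * k → Θ^[j] ≠ id) ∧
    -- the `μʲ`-eigenspace of `θ̃` is `{(x, μʲ x, …, μ^{(n−1)j} x) : x ∈ q_{j̄}}`
    (∀ j : ℕ, {a : Fin n → L | Θ a = μ ^ j • a} =
      {a : Fin n → L | ∃ x : L, θ x = (μ ^ n) ^ j • x ∧
        ∀ l : Fin n, a l = μ ^ ((l : ℕ) * j) • x}) ∧
    -- the parametrisation `x ↦ (x, μʲx, …)` is injective and `q₀`-equivariant,
    -- so each eigenspace is isomorphic to `q_{j̄}` as a `q₀`-module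
    (∀ (j : ℕ) (x y : L),
      (fun l : Fin n => μ ^ ((l : ℕ) * j) • x) = (fun l : Fin n => μ ^ ((l : ℕ) * j) • y) →
      x = y) ∧
    (∀ (j : ℕ) (z x : L), θ z = z →
      (fun l : Fin n => ⁅z, μ ^ ((l : ℕ) * j) • x⁆) =
        (fun l : Fin n => μ ^ ((l : ℕ) * j) • ⁅z, x⁆)) :=
  cyclic_extension_automorphism_order_and_eigenspaces_general n k hn μ θ hbr hθk hθmin Θ hΘ
end

section
/- If θ̃ is the cyclic permutation automorphism of n·q (cyclically permuting the n summands), then the Takiff algebra q⟨n⟩ is isomorphic to the cyclic contraction C_{θ̃}(n·q). -/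
/-! The discrete Fourier transform `x ↦ (∑ᵢ μ^{il} xᵢ)ₗ` for a primitive `n`-th root of unity `μ`
is invertible by the orthogonality of the characters of `ℤ/n`, and it carries the `i`-th Takiff
component into the `μⁱ`-eigenspace of the cyclic shift, since shifting the argument by `s`
multiplies that component by `μ^{is}`. As `μⁱμʲ = μ^{i+j}`, the Takiff bracket, which drops the
products with `i + j ≥ n`, becomes the contracted bracket, which keeps exactly the products of
the eigencomponents of degrees `i + j ≤ n - 1`. -/

open Finset

theorem pow_mod_of_pow_eq_one {G : Type*} [Monoid G] {x : G} {n : ℕ} (hx : x ^ n = 1) (a : ℕ) :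
    x ^ (a % n) = x ^ a := by
  conv_rhs => rw [← Nat.mod_add_div a n, pow_add, pow_mul, hx, one_pow, mul_one]

theorem IsPrimitiveRoot.sum_range_inv_pow_mul_pow {K : Type*} [Field K] {μ : K} {n : ℕ}
    (hμ : IsPrimitiveRoot μ n) {i j : ℕ} (hi : i < n) (hj : j < n) :
    ∑ s ∈ range n, μ⁻¹ ^ (j * s) * μ ^ (i * s) = if i = j then (n : K) else 0 := by
  have hμ0 : μ ≠ 0 := hμ.ne_zero (by omega)
  simp_rw [pow_mul, ← mul_pow]
  split_ifs with hij
  · simp [hij, hμ0]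
  · have hz : (μ⁻¹ ^ j * μ ^ i) ^ n = 1 := by
      rw [mul_pow, pow_right_comm, hμ.inv.pow_eq_one, one_pow, one_mul, pow_right_comm,
        hμ.pow_eq_one, one_pow]
    have hz1 : μ⁻¹ ^ j * μ ^ i ≠ 1 := by
      rw [inv_pow, ne_eq, inv_mul_eq_one₀ (pow_ne_zero _ hμ0)]
      exact fun h => hij (hμ.pow_inj hi hj h.symm)
    rw [geom_sum_eq hz1, hz, sub_self, zero_div]

section DiscreteFourier

variable {K M : Type*} [Field K] [AddCommGroup M] [Module K M] {n : ℕ}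

def discreteFourier (μ : K) : (Fin n → M) →ₗ[K] (Fin n → M) where
  toFun x l := ∑ i : Fin n, μ ^ ((i : ℕ) * (l : ℕ)) • x i
  map_add' x y := by ext l; simp [smul_add, sum_add_distrib]
  map_smul' c x := by ext l; simp [smul_sum, smul_comm c]

@[simp]
theorem discreteFourier_apply (μ : K) (x : Fin n → M) (l : Fin n) :
    discreteFourier μ x l = ∑ i : Fin n, μ ^ ((i : ℕ) * (l : ℕ)) • x i := rfl

theorem discreteFourier_single (μ : K) (j : Fin n) (v : M) (l : Fin n) :
    discreteFourier μ (Pi.single j v) l = μ ^ ((j : ℕ) * l) • v := by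
  simp [Pi.single_apply]

theorem discreteFourier_inv_discreteFourier {μ : K} (hμ : IsPrimitiveRoot μ n)
    (x : Fin n → M) : discreteFourier μ⁻¹ (discreteFourier μ x) = (n : K) • x := by
  ext k
  have horth (i : Fin n) : ∑ l : Fin n, μ⁻¹ ^ ((l : ℕ) * k) * μ ^ ((i : ℕ) * l) =
      if i = k then (n : K) else 0 := by
    simp_rw [Nat.mul_comm _ (k : ℕ)]
    rw [Fin.sum_univ_eq_sum_range (fun l => μ⁻¹ ^ ((k : ℕ) * l) * μ ^ ((i : ℕ) * l)),
      hμ.sum_range_inv_pow_mul_pow i.isLt k.isLt]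
    simp only [Fin.val_inj]
  simp only [discreteFourier_apply, smul_sum, smul_smul]
  rw [sum_comm]
  simp only [← sum_smul, horth, ite_smul, zero_smul, sum_ite_eq', mem_univ, if_true,
    Pi.smul_apply]

def discreteFourierEquiv [NeZero n] {μ : K} (hμ : IsPrimitiveRoot μ n) :
    (Fin n → M) ≃ₗ[K] (Fin n → M) :=
  haveI := hμ.neZero'
  LinearEquiv.ofLinearMap (discreteFourier μ) ((n : K)⁻¹ • discreteFourier μ⁻¹)
    (LinearMap.ext fun x => by
      simpa [inv_smul_smul₀ (NeZero.ne (n : K))] using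
        congrArg ((n : K)⁻¹ • ·) (discreteFourier_inv_discreteFourier hμ.inv x))
    (LinearMap.ext fun x => by
      simp [discreteFourier_inv_discreteFourier hμ x, inv_smul_smul₀ (NeZero.ne (n : K))])

@[simp]
theorem discreteFourierEquiv_apply [NeZero n] {μ : K} (hμ : IsPrimitiveRoot μ n)
    (x : Fin n → M) : discreteFourierEquiv hμ x = discreteFourier μ x := rfl

theorem discreteFourier_apply_add_mod {μ : K} (hμ : μ ^ n = 1) (x : Fin n → M) (l : Fin n)
    (s : ℕ) :
    discreteFourier μ x ⟨((l : ℕ) + s) % n, Nat.mod_lt _ l.pos⟩ =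
      discreteFourier μ (fun i => μ ^ ((i : ℕ) * s) • x i) l := by
  rw [discreteFourier_apply, discreteFourier_apply]
  refine sum_congr rfl fun i _ => ?_
  have hμi : (μ ^ (i : ℕ)) ^ n = 1 := by rw [pow_right_comm, hμ, one_pow]
  rw [smul_smul, pow_mul, pow_mod_of_pow_eq_one hμi, ← pow_mul, ← pow_add, mul_add]

theorem eigenprojection_discreteFourier {μ : K} (hμ : IsPrimitiveRoot μ n)
    {Θ : (Fin n → M) → (Fin n → M)}
    (hΘ : ∀ s a l, Θ^[s] a l = a ⟨((l : ℕ) + s) % n, Nat.mod_lt _ l.pos⟩)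
    (x : Fin n → M) (j : Fin n) :
    (n : K)⁻¹ • ∑ s ∈ range n, μ⁻¹ ^ ((j : ℕ) * s) • Θ^[s] (discreteFourier μ x) =
      discreteFourier μ (Pi.single j (x j)) := by
  have : NeZero n := ⟨j.pos.ne'⟩
  have := hμ.neZero'
  have hshift (s : ℕ) : Θ^[s] (discreteFourier μ x) =
      discreteFourier μ (fun i => μ ^ ((i : ℕ) * s) • x i) :=
    funext fun l => by rw [hΘ, discreteFourier_apply_add_mod hμ.pow_eq_one]
  simp only [hshift, ← map_smul, ← map_sum]
  congr 1
  ext i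
  simp only [Pi.smul_apply, Finset.sum_apply, smul_smul, ← sum_smul,
    hμ.sum_range_inv_pow_mul_pow i.isLt j.isLt, Fin.val_inj, Pi.single_apply]
  split_ifs with hij
  · rw [hij, inv_mul_cancel₀ (NeZero.ne (n : K)), one_smul]
  · rw [mul_zero, zero_smul]

theorem discreteFourier_takiffBracket_apply {L : Type*} [LieRing L] [Module K L] (μ : K)
    (x y : Fin n → L) (l : Fin n) :
    discreteFourier μ (takiffBracket n x y) l = ∑ i : Fin n, ∑ j : Fin n,
      if (i : ℕ) + j < n then μ ^ (((i : ℕ) + j) * l) • ⁅x i, y j⁆ else 0 := by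
  simp only [discreteFourier_apply, takiffBracket, smul_sum, smul_ite, smul_zero]
  rw [sum_comm]
  refine sum_congr rfl fun i _ => ?_
  rw [sum_comm]
  refine sum_congr rfl fun j _ => ?_
  rw [Fin.sum_univ_eq_sum_range
    (fun m => if (i : ℕ) + j = m then μ ^ (m * (l : ℕ)) • ⁅x i, y j⁆ else 0), sum_ite_eq]
  simp only [mem_range]

end DiscreteFourier

theorem iterate_apply_of_cyclic_shift {α : Type*} {n : ℕ} (hn : 0 < n)
    {Θ : (Fin n → α) → (Fin n → α)}
    (hΘ : ∀ a l, Θ a l = if h : (l : ℕ) + 1 < n then a ⟨(l : ℕ) + 1, h⟩ else a ⟨0, hn⟩)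
    (s : ℕ) (a : Fin n → α) (l : Fin n) :
    Θ^[s] a l = a ⟨((l : ℕ) + s) % n, Nat.mod_lt _ hn⟩ := by
  induction s generalizing a with
  | zero => simp [Nat.mod_eq_of_lt l.isLt]
  | succ s ih =>
    have hmod : ((l : ℕ) + (s + 1)) % n = (((l : ℕ) + s) % n + 1) % n := by
      rw [Nat.mod_add_mod, Nat.add_assoc]
    rw [Function.iterate_succ_apply, ih, hΘ]
    split_ifs with h <;> congr 1 <;> ext <;> dsimp only at h ⊢
    · rw [hmod, Nat.mod_eq_of_lt h]
    · rw [hmod, show ((l : ℕ) + s) % n + 1 = n by have := Nat.mod_lt ((l : ℕ) + s) hn; omega,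
        Nat.mod_self]

theorem takiff_iso_cyclic_contraction_of_permutation_general
    {𝕜 L : Type*} [Field 𝕜] [LieRing L] [LieAlgebra 𝕜 L]
    (n : ℕ) (hn : 0 < n)
    (μ : 𝕜) (hμ : IsPrimitiveRoot μ n)
    -- the cyclic shift `θ̃` on `n·q`
    (Θ : (Fin n → L) → (Fin n → L))
    (hΘ : ∀ (a : Fin n → L) (l : Fin n), Θ a l =
      if h : (l : ℕ) + 1 < n then a ⟨(l : ℕ) + 1, h⟩ else a ⟨0, hn⟩)
    -- the projections onto the `μʲ`-eigenspaces of `θ̃`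
    (proj : ℕ → (Fin n → L) → (Fin n → L))
    (hproj : ∀ (j : ℕ) (a : Fin n → L), proj j a =
      ((n : ℕ) : 𝕜)⁻¹ • ∑ s ∈ Finset.range n, (μ⁻¹) ^ (j * s) • Θ^[s] a)
    -- the bracket of the cyclic contraction `C_{θ̃}(n·q)`
    (Bc : (Fin n → L) → (Fin n → L) → (Fin n → L))
    (hBc : ∀ a a' : Fin n → L, Bc a a' =
      ∑ i ∈ Finset.range n, ∑ j ∈ Finset.range n,
        if i + j ≤ n - 1 then (fun l => ⁅proj i a l, proj j a' l⁆) else 0) :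
    -- the isomorphism `q⟨n⟩ ≃ C_{θ̃}(n·q)`
    ∃ e : (Fin n → L) ≃ₗ[𝕜] (Fin n → L),
      ∀ x y : Fin n → L, e (takiffBracket n x y) = Bc (e x) (e y) := by
  have : NeZero n := ⟨hn.ne'⟩
  have hprojF (j : Fin n) (x : Fin n → L) (l : Fin n) :
      proj j (discreteFourier μ x) l = μ ^ ((j : ℕ) * l) • x j := by
    rw [hproj, eigenprojection_discreteFourier hμ (iterate_apply_of_cyclic_shift hn hΘ),
      discreteFourier_single]
  refine ⟨discreteFourierEquiv hμ, fun x y => funext fun l => ?_⟩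
  simp only [discreteFourierEquiv_apply, hBc, discreteFourier_takiffBracket_apply,
    Finset.sum_apply, sum_range, ite_apply, Pi.zero_apply, Nat.le_sub_one_iff_lt hn]
  refine sum_congr rfl fun i _ => sum_congr rfl fun j _ => ?_
  rw [hprojF, hprojF, smul_lie, lie_smul, smul_smul, ← pow_add, ← add_mul]

/-- Let `θ̃` be the cyclic permutation automorphism of `n·q`
(cyclically permuting the `n` summands).  Then the Takiff algebra `q⟨n⟩` is isomorphic
to the cyclic contraction `C_{θ̃}(n·q)`, i.e. the contraction of `n·q` associated with
the `ℤ_n`-grading by `θ̃`-eigenspaces. -/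
theorem takiff_iso_cyclic_contraction_of_permutation
    {𝕜 L : Type*} [Field 𝕜] [CharZero 𝕜] [IsAlgClosed 𝕜] [LieRing L] [LieAlgebra 𝕜 L]
    (n : ℕ) (hn : 0 < n)
    (μ : 𝕜) (hμ : IsPrimitiveRoot μ n)
    -- the cyclic shift `θ̃` on `n·q`
    (Θ : (Fin n → L) → (Fin n → L))
    (hΘ : ∀ (a : Fin n → L) (l : Fin n), Θ a l =
      if h : (l : ℕ) + 1 < n then a ⟨(l : ℕ) + 1, h⟩ else a ⟨0, hn⟩)
    -- the projections onto the `μʲ`-eigenspaces of `θ̃`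
    (proj : ℕ → (Fin n → L) → (Fin n → L))
    (hproj : ∀ (j : ℕ) (a : Fin n → L), proj j a =
      ((n : ℕ) : 𝕜)⁻¹ • ∑ s ∈ Finset.range n, (μ⁻¹) ^ (j * s) • Θ^[s] a)
    -- the bracket of the cyclic contraction `C_{θ̃}(n·q)`
    (Bc : (Fin n → L) → (Fin n → L) → (Fin n → L))
    (hBc : ∀ a a' : Fin n → L, Bc a a' =
      ∑ i ∈ Finset.range n, ∑ j ∈ Finset.range n,
        if i + j ≤ n - 1 then (fun l => ⁅proj i a l, proj j a' l⁆) else 0) :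
    -- the isomorphism `q⟨n⟩ ≃ C_{θ̃}(n·q)`
    ∃ e : (Fin n → L) ≃ₗ[𝕜] (Fin n → L),
      ∀ x y : Fin n → L, e (takiffBracket n x y) = Bc (e x) (e y) :=
  takiff_iso_cyclic_contraction_of_permutation_general n hn μ hμ Θ hΘ proj hproj Bc hBc
end
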